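/- arXiv:1806.09726 — 2 statements merged into one kernel-verified Lean document; each statement's English description precedes it below -/
import Mathlib

section
/- Let m, n, N ≥ 1 be integers. Suppose there exist a real p ∈ (0,1) and nonnegative integers c ≤ m/2 and d ≤ n/2 such that p^(C(m,2) − c(c−1)) · (2N)^(m−c) + (1−p)^(C(n,2) − d(d−1)) · (2N)^(n−d) ≤ 1/2, where C(k,2) = k(k−1)/2. Then the online Ramsey number satisfies r̃(m,n) > N. -/
/-!
Let Painter colour each edge red with probability `p`, independently, and fix Builder's strategy.
Given a red `m`-clique, take a matching of `c` clique edges minimising `∑ 3 ^ (turn built)`; an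
exchange argument shows that at most `c (c - 1)` clique edges meet a matching edge built after
them. Record the turns of the matching edges and, for each of the `m - 2c` other clique vertices,
the turn and end of its first appearance: there are at most `(2N) ^ (m - c)` records. All other
clique edges have both ends revealed by the record when they are built. Whether a turn's edge is
revealed is decided before it is coloured, so for a fixed record the probability that at least
`C(m,2) - c (c - 1)` revealed edges appear and all are red is at most `p ^ (C(m,2) - c (c - 1))`.
Adding the blue bound, Builder wins within `N` turns with probability below `1`.
-/

open scoped Classical

namespace OnlineRamseyGame

/-- A valid Builder strategy: it never builds a loop, and along any play the
edges built are pairwise distinct. -/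
def ValidBuilder {V : Type*} (B : List Bool → Sym2 V) : Prop :=
  (∀ h : List Bool, ¬ (B h).IsDiag) ∧
  ∀ h : List Bool, ∀ i : ℕ, i < h.length → B (h.take i) ≠ B h

/-- The history of Painter's colors after `t` turns against Painter strategy `P`
(Builder's moves are determined by this history). -/
def histOf (P : List Bool → Bool) : ℕ → List Bool
  | 0 => []
  | t + 1 => histOf P t ++ [P (histOf P t)]

/-- The graph built by `edge` contains a monochromatic clique on `k` vertices in
color `col` within the first `N` turns. -/
def HasMonoClique {V : Type*} (edge : ℕ → Sym2 V) (color : ℕ → Bool)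
    (N k : ℕ) (col : Bool) : Prop :=
  ∃ S : Finset V, S.card = k ∧
    ∀ u ∈ S, ∀ v ∈ S, u ≠ v → ∃ t, t < N ∧ edge t = s(u, v) ∧ color t = col

/-- Builder has a valid strategy winning the `(m,n)` online Ramsey game within `N`
turns against every Painter strategy (red = `true`, blue = `false`). -/
def BuilderWins (m n N : ℕ) : Prop :=
  ∃ B : List Bool → Sym2 ℕ, ValidBuilder B ∧
    ∀ P : List Bool → Bool,
      HasMonoClique (fun t => B (histOf P t)) (fun t => P (histOf P t)) N m true ∨
      HasMonoClique (fun t => B (histOf P t)) (fun t => P (histOf P t)) N n false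

/-- The online Ramsey number `r̃(m,n)`: the least `N` such that Builder can
guarantee a win within `N` turns. -/
noncomputable def onlineRamsey (m n : ℕ) : ℕ := sInf {N | BuilderWins m n N}

open Finset

section ProductWeight

variable {α : Type*} [Fintype α] (q : α → ℝ)

noncomputable def prob {N : ℕ} (E : (Fin N → α) → Prop) : ℝ :=
  ∑ h with E h, ∏ t, q (h t)

variable {q}

lemma prob_eq_sum_ite {N : ℕ} (E : (Fin N → α) → Prop) :
    prob q E = ∑ h, if E h then ∏ t, q (h t) else 0 :=
  sum_filter _ _

lemma prob_mono (hq0 : ∀ a, 0 ≤ q a) {N : ℕ} {E F : (Fin N → α) → Prop}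
    (hEF : ∀ h, E h → F h) : prob q E ≤ prob q F :=
  sum_le_sum_of_subset_of_nonneg (monotone_filter_right _ fun h _ => hEF h)
    fun h _ _ => prod_nonneg fun t _ => hq0 (h t)

lemma prob_true (hq1 : ∑ a, q a = 1) (N : ℕ) : prob q (fun _ : Fin N → α => True) = 1 := by
  simp [prob, ← Fintype.prod_sum, hq1]

lemma prob_le_one (hq0 : ∀ a, 0 ≤ q a) (hq1 : ∑ a, q a = 1) {N : ℕ}
    (E : (Fin N → α) → Prop) : prob q E ≤ 1 :=
  prob_true hq1 N ▸ prob_mono hq0 fun _ _ => trivial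

lemma prob_or_le (hq0 : ∀ a, 0 ≤ q a) {N : ℕ} (E F : (Fin N → α) → Prop) :
    prob q (fun h => E h ∨ F h) ≤ prob q E + prob q F := by
  simp only [prob_eq_sum_ite, ← sum_add_distrib]
  refine sum_le_sum fun h _ => ?_
  have hw : 0 ≤ ∏ t, q (h t) := prod_nonneg fun t _ => hq0 (h t)
  split_ifs <;> first | linarith | tauto

lemma prob_exists_le (hq0 : ∀ a, 0 ≤ q a) {ι : Type*} [Fintype ι] {N : ℕ}
    (E : ι → (Fin N → α) → Prop) :
    prob q (fun h => ∃ i, E i h) ≤ ∑ i, prob q (E i) := by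
  simp only [prob_eq_sum_ite]
  rw [sum_comm]
  refine sum_le_sum fun h _ => ?_
  have hw : 0 ≤ ∏ t, q (h t) := prod_nonneg fun t _ => hq0 (h t)
  split_ifs with hE
  · obtain ⟨i, hi⟩ := hE
    calc ∏ t, q (h t) = if E i h then ∏ t, q (h t) else 0 := (if_pos hi).symm
      _ ≤ _ := single_le_sum (f := fun i => if E i h then ∏ t, q (h t) else 0)
          (fun j _ => by positivity) (mem_univ i)
  · exact sum_nonneg fun j _ => by positivity

lemma prob_cons {N : ℕ} (E : (Fin (N + 1) → α) → Prop) :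
    prob q E = ∑ a, q a * prob q (fun g => E (Fin.cons a g)) := by
  simp only [prob_eq_sum_ite, mul_sum]
  rw [← (Fin.consEquiv fun _ => α).sum_comp, Fintype.sum_prod_type]
  refine sum_congr rfl fun a _ => sum_congr rfl fun g _ => ?_
  simp [Fin.prod_univ_succ, mul_ite, Fin.consEquiv]

lemma prob_const_and {N : ℕ} (P : Prop) (E : (Fin N → α) → Prop) :
    prob q (fun h => P ∧ E h) = if P then prob q E else 0 := by
  by_cases hP : P <;> simp [prob, hP]

end ProductWeight

section Predictable

variable {α : Type*}

def IsPredictable {N : ℕ} (R : (Fin N → α) → Fin N → Prop) : Prop :=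
  ∀ g g' t, (∀ s < t, g s = g' s) → (R g t ↔ R g' t)

lemma IsPredictable.cons {N : ℕ} {R : (Fin (N + 1) → α) → Fin (N + 1) → Prop}
    (hR : IsPredictable R) (b : α) :
    IsPredictable fun g (t : Fin N) => R (Fin.cons b g) t.succ := by
  refine fun g g' t hgg' => hR _ _ _ fun s hs => ?_
  cases s using Fin.cases with
  | zero => rfl
  | succ s => simpa using hgg' s (Fin.succ_lt_succ_iff.1 hs)

lemma IsPredictable.zero_iff {N : ℕ} {R : (Fin (N + 1) → α) → Fin (N + 1) → Prop}
    (hR : IsPredictable R) (g g' : Fin (N + 1) → α) : R g 0 ↔ R g' 0 :=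
  hR g g' 0 fun s hs => absurd hs (Fin.not_lt_zero s)

def SelectedAllEq {N : ℕ} (R : (Fin N → α) → Fin N → Prop) (k : ℕ) (a : α)
    (h : Fin N → α) : Prop :=
  k ≤ #{t | R h t} ∧ ∀ t, R h t → h t = a

lemma selectedAllEq_cons {N : ℕ} (R : (Fin (N + 1) → α) → Fin (N + 1) → Prop) (k : ℕ)
    (a b : α) (g : Fin N → α) :
    SelectedAllEq R k a (Fin.cons b g) ↔ (R (Fin.cons b g) 0 → b = a) ∧
      SelectedAllEq (fun g t => R (Fin.cons b g) t.succ)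
        (if R (Fin.cons b g) 0 then k - 1 else k) a g := by
  simp only [SelectedAllEq, Fin.card_filter_univ_succ', Fin.forall_fin_succ, Fin.cons_zero,
    Fin.cons_succ]
  split_ifs <;>
    exact ⟨fun ⟨_, h2, h3⟩ => ⟨h2, by omega, h3⟩,
      fun ⟨h1, h2, h3⟩ => ⟨by omega, h1, h3⟩⟩

/-- Whether a turn is selected is known before its entry is drawn, so every selected turn
contributes a factor `q a`, whatever happened before. -/
theorem prob_selectedAllEq_le [Fintype α] {q : α → ℝ} (hq0 : ∀ a, 0 ≤ q a)
    (hq1 : ∑ a, q a = 1) (a : α) {N : ℕ} (k : ℕ) (R : (Fin N → α) → Fin N → Prop)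
    (hR : IsPredictable R) : prob q (SelectedAllEq R k a) ≤ q a ^ k := by
  have hqa : q a ≤ 1 := hq1 ▸ single_le_sum (fun b _ => hq0 b) (mem_univ a)
  induction N generalizing k with
  | zero =>
    cases k with
    | zero => exact (prob_le_one hq0 hq1 _).trans (by simp)
    | succ k => simpa [prob, SelectedAllEq] using pow_nonneg (hq0 a) _
  | succ N ih =>
    set r := R (fun _ => a) 0
    have hr : ∀ b g, R (Fin.cons b g) 0 ↔ r := fun b g => hR.zero_iff _ _
    simp only [prob_cons, selectedAllEq_cons, hr, prob_const_and]
    by_cases h0 : r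
    · simp only [h0, if_true, forall_const, mul_ite, mul_zero, sum_ite_eq', mem_univ]
      calc q a * prob q _ ≤ q a * q a ^ (k - 1) :=
            mul_le_mul_of_nonneg_left (ih _ _ (hR.cons a)) (hq0 a)
        _ ≤ q a ^ k := by
          cases k with
          | zero => simpa using hqa
          | succ k => rw [Nat.add_sub_cancel, pow_succ']
    · simp only [h0, if_false, false_implies, if_true]
      calc ∑ b, q b * prob q _ ≤ ∑ b, q b * q a ^ k :=
            sum_le_sum fun b _ => mul_le_mul_of_nonneg_left (ih _ _ (hR.cons b)) (hq0 b)
        _ = q a ^ k := by rw [← sum_mul, hq1, one_mul]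

end Predictable

section PairMatching

variable {α : Type*} {S : Finset α}

def IsPairMatching (S : Finset α) (M : Finset (Finset α)) : Prop :=
  M ⊆ S.powersetCard 2 ∧ (M : Set (Finset α)).PairwiseDisjoint id

lemma IsPairMatching.card_eq {M : Finset (Finset α)} (hM : IsPairMatching S M)
    {e : Finset α} (he : e ∈ M) : #e = 2 :=
  (mem_powersetCard.1 (hM.1 he)).2

lemma IsPairMatching.eq_of_not_disjoint {M : Finset (Finset α)} (hM : IsPairMatching S M)
    {e f : Finset α} (he : e ∈ M) (hf : f ∈ M) (hef : ¬ Disjoint e f) : e = f :=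
  hM.2.elim he hf hef

def IsMinPairMatching (S : Finset α) (w : Finset α → ℕ) (M : Finset (Finset α)) : Prop :=
  IsPairMatching S M ∧
    ∀ M', IsPairMatching S M' → #M' = #M → ∑ f ∈ M, w f ≤ ∑ f ∈ M', w f

variable [DecidableEq α]

lemma IsPairMatching.biUnion_subset {M : Finset (Finset α)} (hM : IsPairMatching S M) :
    M.biUnion id ⊆ S :=
  Finset.biUnion_subset.2 fun _ hf => (mem_powersetCard.1 (hM.1 hf)).1

lemma IsPairMatching.card_biUnion {M : Finset (Finset α)} (hM : IsPairMatching S M) :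
    #(M.biUnion id) = 2 * #M := by
  rw [Finset.card_biUnion hM.2]
  simp only [id]
  rw [sum_congr rfl fun f hf => hM.card_eq hf, sum_const, smul_eq_mul, mul_comm]

lemma isPairMatching_pair {u v : Finset α} (hu : u ⊆ S) (hv : v ⊆ S) (hu2 : #u = 2)
    (hv2 : #v = 2) (huv : Disjoint u v) : IsPairMatching S {u, v} := by
  refine ⟨by simp [insert_subset_iff, mem_powersetCard, *], ?_⟩
  rw [coe_pair, Set.pairwiseDisjoint_insert]
  exact ⟨Set.pairwiseDisjoint_singleton _ _, fun j hj _ => by rwa [Set.mem_singleton_iff.1 hj]⟩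

lemma exists_isPairMatching_card (c : ℕ) (hc : 2 * c ≤ #S) :
    ∃ M, IsPairMatching S M ∧ #M = c := by
  induction c generalizing S with
  | zero => exact ⟨∅, ⟨empty_subset _, by simp⟩, rfl⟩
  | succ c ih =>
    obtain ⟨a, ha, b, hb, hab⟩ := one_lt_card.1 (by omega : 1 < #S)
    have hab' : {a, b} ⊆ S := by simp [insert_subset_iff, ha, hb]
    obtain ⟨M, hM, hMc⟩ := ih (S := S \ {a, b})
      (by rw [card_sdiff_of_subset hab', card_pair hab]; omega)
    have hdisj : ∀ f ∈ M, Disjoint {a, b} f := fun f hf =>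
      disjoint_of_subset_right (mem_powersetCard.1 (hM.1 hf)).1 disjoint_sdiff
    have hnot : {a, b} ∉ M := fun h => by simpa using hdisj _ h
    refine ⟨insert {a, b} M, ⟨insert_subset ?_ (hM.1.trans (powersetCard_mono sdiff_subset)),
      ?_⟩, by rw [card_insert_of_notMem hnot, hMc]⟩
    · simp [mem_powersetCard, hab', card_pair hab]
    · rw [coe_insert]
      exact hM.2.insert fun f hf _ => hdisj f hf

lemma sum_le_sum_of_exchange {w : Finset α → ℕ} {M D A : Finset (Finset α)}
    (hM : IsMinPairMatching S w M) (hD : D ⊆ M) (hA : IsPairMatching S A) (hcard : #A = #D)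
    (hdisj : ∀ a ∈ A, ∀ f ∈ M \ D, Disjoint a f) :
    ∑ f ∈ D, w f ≤ ∑ a ∈ A, w a := by
  have hAM : Disjoint (M \ D) A := disjoint_left.2 fun f hf hfA => by
    simpa [disjoint_self.1 (hdisj f hfA f hf)] using hA.card_eq hfA
  have hM' : IsPairMatching S (M \ D ∪ A) := by
    refine ⟨union_subset (sdiff_subset.trans hM.1.1) hA.1, ?_⟩
    rw [coe_union, Set.pairwiseDisjoint_union]
    exact ⟨hM.1.2.subset (by simp), hA.2, fun f hf a ha _ => (hdisj a ha f hf).symm⟩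
  have := hM.2 _ hM' (by rw [card_union_of_disjoint hAM, card_sdiff_of_subset hD, hcard,
    Nat.sub_add_cancel (card_le_card hD)])
  rw [sum_union hAM, ← sum_sdiff hD] at this
  omega

lemma three_pow_add_three_pow_lt {a b c : ℕ} (ha : a < c) (hb : b < c) :
    3 ^ a + 3 ^ b < 3 ^ c := by
  have h3 : 3 ^ c = 3 * 3 ^ (c - 1) := by rw [← pow_succ', Nat.sub_add_cancel (by omega)]
  have := Nat.pow_le_pow_right (by norm_num : 0 < 3) (by omega : a ≤ c - 1)
  have := Nat.pow_le_pow_right (by norm_num : 0 < 3) (by omega : b ≤ c - 1)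
  have := Nat.one_le_pow (c - 1) 3 (by norm_num)
  omega

lemma mem_crossPairs {x y z w : α} {e : Finset α} (hxy : x ≠ y) (hzw : z ≠ w)
    (hfg : Disjoint ({x, y} : Finset α) {z, w}) (he : e ⊆ {x, y} ∪ {z, w}) (he2 : #e = 2)
    (hef : e ≠ {x, y}) (heg : e ≠ {z, w}) :
    e ∈ ({{x, z}, {y, w}} : Finset (Finset α)) ∨
      e ∈ ({{x, w}, {y, z}} : Finset (Finset α)) := by
  obtain ⟨a, b, hab, rfl⟩ := card_eq_two.1 he2
  simp only [disjoint_insert_left, disjoint_insert_right, disjoint_singleton, mem_insert,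
    mem_singleton] at hfg ⊢
  simp only [insert_subset_iff, mem_union, mem_insert, mem_singleton, singleton_subset_iff] at he
  obtain ⟨(rfl | rfl) | rfl | rfl, (rfl | rfl) | rfl | rfl⟩ := he <;> simp_all [pair_comm]

noncomputable def earlyPairs (S : Finset α) (time : Finset α → ℕ) (M : Finset (Finset α)) :
    Finset (Finset α) :=
  {e ∈ S.powersetCard 2 | ∃ f ∈ M, ¬ Disjoint e f ∧ time e < time f}

variable {time : Finset α → ℕ} {M : Finset (Finset α)}

lemma earlyPairs_subset : earlyPairs S time M ⊆ S.powersetCard 2 :=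
  filter_subset _ _

lemma mem_earlyPairs {e : Finset α} :
    e ∈ earlyPairs S time M ↔
      e ∈ S.powersetCard 2 ∧ ∃ f ∈ M, ¬ Disjoint e f ∧ time e < time f :=
  mem_filter

/-- Base `3` makes two pairs built before the later of `f` and `g` lighter than `f` and `g`. -/
lemma not_forall_lt_max_of_exchange (hM : IsMinPairMatching S (fun e => 3 ^ time e) M)
    {f g : Finset α} (hf : f ∈ M) (hg : g ∈ M) (hfg : f ≠ g) {A : Finset (Finset α)}
    (hA : IsPairMatching S A) (hA2 : #A = 2) (hAfg : ∀ a ∈ A, a ⊆ f ∪ g) :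
    ¬ ∀ a ∈ A, time a < max (time f) (time g) := by
  intro hlt
  have hexch := sum_le_sum_of_exchange hM (D := {f, g}) (by simp [insert_subset_iff, hf, hg])
    hA (by rw [hA2, card_pair hfg]) fun a ha h hh => by
      obtain ⟨hhM, hhf, hhg⟩ : h ∈ M ∧ h ≠ f ∧ h ≠ g := by simpa using hh
      exact disjoint_of_subset_left (hAfg a ha) (disjoint_union_left.2
        ⟨hM.1.2 hf hhM hhf.symm, hM.1.2 hg hhM hhg.symm⟩)
  obtain ⟨a, b, hab, rfl⟩ := card_eq_two.1 hA2
  rw [sum_pair hfg, sum_pair hab] at hexch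
  have := three_pow_add_three_pow_lt (hlt a (by simp)) (hlt b (by simp))
  rcases max_choice (time f) (time g) with h | h <;> rw [h] at this <;>
    linarith [Nat.zero_le (3 ^ time f), Nat.zero_le (3 ^ time g)]

lemma card_filter_crossPairs_le_one (hM : IsMinPairMatching S (fun e => 3 ^ time e) M)
    {x y z w : α} (hf : {x, y} ∈ M) (hg : {z, w} ∈ M) (hfg : ({x, y} : Finset α) ≠ {z, w}) :
    #{e ∈ ({{x, z}, {y, w}} : Finset (Finset α)) |
      time e < max (time {x, y}) (time {z, w})} ≤ 1 := by
  have hxy : x ≠ y := fun h => by simpa [h] using hM.1.card_eq hf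
  have hzw : z ≠ w := fun h => by simpa [h] using hM.1.card_eq hg
  have hdisj : Disjoint ({x, y} : Finset α) {z, w} := hM.1.2 hf hg hfg
  have hS := (mem_powersetCard.1 (hM.1.1 hf)).1
  have hS' := (mem_powersetCard.1 (hM.1.1 hg)).1
  simp only [disjoint_insert_left, disjoint_insert_right, disjoint_singleton, mem_insert,
    mem_singleton, not_or] at hdisj
  simp only [insert_subset_iff, singleton_subset_iff] at hS hS'
  have hA : IsPairMatching S {{x, z}, {y, w}} := isPairMatching_pair
    (by simp [insert_subset_iff, *]) (by simp [insert_subset_iff, *])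
    (card_pair (by tauto)) (card_pair (by tauto)) (by simp; tauto)
  have hA2 : #({{x, z}, {y, w}} : Finset (Finset α)) = 2 := card_pair fun h => by
    have hx : x ∈ ({y, w} : Finset α) := h ▸ mem_insert_self x {z}
    simp [hxy] at hx
    tauto
  by_contra hlt
  refine not_forall_lt_max_of_exchange hM hf hg hfg hA hA2 (by simp [insert_subset_iff]) ?_
  exact filter_eq_self.1 (eq_of_subset_of_card_le (filter_subset _ _) (by omega))

lemma card_filter_subset_union_le_two (hM : IsMinPairMatching S (fun e => 3 ^ time e) M)
    {f g : Finset α} (hf : f ∈ M) (hg : g ∈ M) (hfg : f ≠ g) :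
    #{e ∈ S.powersetCard 2 \ M | e ⊆ f ∪ g ∧ time e < max (time f) (time g)} ≤ 2 := by
  obtain ⟨x, y, hxy, rfl⟩ := card_eq_two.1 (hM.1.card_eq hf)
  obtain ⟨z, w, hzw, rfl⟩ := card_eq_two.1 (hM.1.card_eq hg)
  have hdisj : Disjoint ({x, y} : Finset α) {z, w} := hM.1.2 hf hg hfg
  have hg' : ({w, z} : Finset α) ∈ M := pair_comm z w ▸ hg
  calc _ ≤ #({e ∈ ({{x, z}, {y, w}} : Finset (Finset α)) |
          time e < max (time {x, y}) (time {z, w})} ∪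
        {e ∈ ({{x, w}, {y, z}} : Finset (Finset α)) |
          time e < max (time {x, y}) (time {w, z})}) := by
        refine card_le_card fun e he => ?_
        obtain ⟨⟨he2, heM⟩, hsub, hlt⟩ := by simpa only [mem_filter, mem_sdiff] using he
        have hne : ∀ h ∈ M, e ≠ h := fun h hh heh => heM (heh ▸ hh)
        rw [pair_comm w z, mem_union, mem_filter, mem_filter]
        rcases mem_crossPairs hxy hzw hdisj hsub (mem_powersetCard.1 he2).2 (hne _ hf)
          (hne _ hg) with h | h <;> simp [h, hlt]
    _ ≤ 1 + 1 := (card_union_le _ _).trans (add_le_add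
        (card_filter_crossPairs_le_one hM hf hg hfg)
        (card_filter_crossPairs_le_one hM hf hg' (pair_comm z w ▸ hfg)))

lemma exists_partner_of_mem_earlyPairs (hM : IsMinPairMatching S (fun e => 3 ^ time e) M)
    {e : Finset α} (he : e ∈ earlyPairs S time M) :
    ∃ f ∈ M, ∃ g ∈ M, f ≠ g ∧ e ⊆ f ∪ g ∧ time e < time f := by
  obtain ⟨he, f, hf, hef, hlt⟩ := mem_earlyPairs.1 he
  obtain ⟨x, hxe, hxf⟩ := not_disjoint_iff.1 hef
  obtain ⟨z, hz⟩ := card_eq_one.1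
    (by rw [card_erase_of_mem hxe, (mem_powersetCard.1 he).2] : #(e.erase x) = 1)
  rw [← insert_erase hxe, hz] at he hlt ⊢
  have hzf : z ∉ f := fun hzf => by
    have := eq_of_subset_of_card_le (by simp [insert_subset_iff, hxf, hzf])
      ((mem_powersetCard.1 he).2.trans (hM.1.card_eq hf).symm).ge
    simp [this] at hlt
  by_cases hcov : ∃ g ∈ M, z ∈ g
  · obtain ⟨g, hg, hzg⟩ := hcov
    refine ⟨f, hf, g, hg, fun h => hzf (h ▸ hzg), ?_, hlt⟩
    simp [insert_subset_iff, hxf, hzg]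
  · push Not at hcov
    have := sum_le_sum_of_exchange hM (D := {f}) (A := {{x, z}}) (by simpa using hf)
      ⟨by simpa using he, by simp⟩ rfl fun a ha h hh => by
        obtain ⟨hhM, hhf⟩ : h ∈ M ∧ h ≠ f := by simpa using hh
        have hxh : x ∉ h := disjoint_left.1 (hM.1.2 hf hhM hhf.symm) hxf
        simp_all [disjoint_insert_left]
    simp only [sum_singleton] at this
    exact absurd this (not_le.2 (Nat.pow_lt_pow_right (by norm_num) hlt))

/-- Take a matching minimising `∑ 3 ^ time`: an early pair joins two of its pairs `f ≠ g`, and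
of the four pairs joining `f` and `g` at most two are built before the later of them. -/
theorem exists_isPairMatching_card_earlyPairs_le (time : Finset α → ℕ) {c : ℕ}
    (hc : 2 * c ≤ #S) :
    ∃ M, IsPairMatching S M ∧ #M = c ∧ #(earlyPairs S time M) ≤ c * (c - 1) := by
  obtain ⟨M₀, hM₀, hM₀c⟩ := exists_isPairMatching_card c hc
  obtain ⟨M, hMmem, hmin⟩ := exists_min_image
    {M ∈ (S.powersetCard 2).powerset | IsPairMatching S M ∧ #M = c}
    (fun M => ∑ f ∈ M, 3 ^ time f) ⟨M₀, by simp [hM₀, hM₀c, hM₀.1]⟩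
  obtain ⟨hM, hMc⟩ := (mem_filter.1 hMmem).2
  refine ⟨M, hM, hMc, ?_⟩
  have hmin : IsMinPairMatching S (fun e => 3 ^ time e) M :=
    ⟨hM, fun M' hM' hM'c => hmin M' (by simp [hM', hM'c, hMc, hM'.1])⟩
  let joining (D : Finset (Finset α)) : Finset (Finset α) :=
    {e ∈ S.powersetCard 2 \ M | e ⊆ D.sup id ∧ time e < D.sup time}
  calc #(earlyPairs S time M) ≤ #((M.powersetCard 2).biUnion joining) := by
        refine card_le_card fun e he => ?_
        obtain ⟨f, hf, g, hg, hfg, hsub, hlt⟩ := exists_partner_of_mem_earlyPairs hmin he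
        have heM : e ∉ M := fun heM => by
          obtain ⟨-, h, hh, heh, hlt'⟩ := mem_earlyPairs.1 he
          exact (hM.eq_of_not_disjoint heM hh heh ▸ hlt').false
        refine mem_biUnion.2 ⟨{f, g}, ?_, ?_⟩
        · simp [mem_powersetCard, insert_subset_iff, hf, hg, card_pair hfg]
        · simp [joining, (mem_earlyPairs.1 he).1, heM, hsub, hlt]
    _ ≤ #(M.powersetCard 2) * 2 := card_biUnion_le_card_mul _ _ _ fun D hD => by
        obtain ⟨hDM, hD2⟩ := mem_powersetCard.1 hD
        obtain ⟨f, g, hfg, rfl⟩ := card_eq_two.1 hD2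
        simpa [joining] using card_filter_subset_union_le_two hmin
          (hDM (mem_insert_self f _)) (hDM (by simp)) hfg
    _ = c * (c - 1) := by
      rw [card_powersetCard, hMc, Nat.choose_two_right,
        Nat.div_mul_cancel (Nat.even_mul_pred_self c).two_dvd]

end PairMatching

lemma _root_.Finset.exists_fin_enum {β : Type*} (s : Finset β) {n : ℕ} (hn : #s = n) :
    ∃ f : Fin n → β, (∀ i, f i ∈ s) ∧ ∀ x ∈ s, ∃ i, f i = x := by
  subst hn
  exact ⟨fun i => s.equivFin.symm i, fun i => (s.equivFin.symm i).2,
    fun x hx => ⟨s.equivFin ⟨x, hx⟩, by simp⟩⟩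

noncomputable def endpoint {α : Type*} (z : Sym2 α) (b : Bool) : α :=
  if b then z.out.1 else z.out.2

lemma exists_endpoint_eq {α : Type*} {z : Sym2 α} {x : α} (hx : x ∈ z) :
    ∃ b, endpoint z b = x := by
  rw [← Quot.out_eq z] at hx
  rcases Sym2.mem_iff.1 hx with rfl | rfl
  exacts [⟨true, rfl⟩, ⟨false, rfl⟩]

section Play

variable {N : ℕ} (B : List Bool → Sym2 ℕ) {c k : ℕ}

def builtEdge (h : Fin N → Bool) (t : Fin N) : Sym2 ℕ :=
  B ((List.ofFn h).take t)

def IsMonoClique (h : Fin N → Bool) (S : Finset ℕ) (col : Bool) : Prop :=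
  ∀ u ∈ S, ∀ v ∈ S, u ≠ v → ∃ t, builtEdge B h t = s(u, v) ∧ h t = col

def Revealed (σ : (Fin c → Fin N) × (Fin k → Fin N × Bool)) (h : Fin N → Bool) (t : Fin N)
    (x : ℕ) : Prop :=
  (∃ j, σ.1 j ≤ t ∧ x ∈ builtEdge B h (σ.1 j)) ∨
    ∃ i, (σ.2 i).1 ≤ t ∧ endpoint (builtEdge B h (σ.2 i).1) (σ.2 i).2 = x

def IsRevealedEdge (σ : (Fin c → Fin N) × (Fin k → Fin N × Bool)) (h : Fin N → Bool)
    (t : Fin N) : Prop :=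
  ∀ x ∈ builtEdge B h t, Revealed B σ h t x

lemma builtEdge_eq_of_agree {g g' : Fin N → Bool} {t : Fin N} (hgg' : ∀ s < t, g s = g' s)
    {s : Fin N} (hs : s ≤ t) : builtEdge B g s = builtEdge B g' s := by
  refine congrArg B (List.ext_getElem (by simp) fun i hi _ => ?_)
  simp only [List.length_take, List.length_ofFn] at hi
  simpa using hgg' ⟨i, by omega⟩ (Fin.lt_def.2 (by simp; omega))

lemma isPredictable_isRevealedEdge (σ : (Fin c → Fin N) × (Fin k → Fin N × Bool)) :
    IsPredictable (IsRevealedEdge B σ) := by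
  intro g g' t hgg'
  simp only [IsRevealedEdge, Revealed, builtEdge_eq_of_agree B hgg' le_rfl]
  refine forall₂_congr fun x _ => or_congr (exists_congr fun j => and_congr_right fun hj => ?_)
    (exists_congr fun i => and_congr_right fun hi => ?_)
  · rw [builtEdge_eq_of_agree B hgg' hj]
  · rw [builtEdge_eq_of_agree B hgg' hi]

variable {B} {h : Fin N → Bool}

lemma builtEdge_injective (hB : ValidBuilder B) : Function.Injective (builtEdge B h) := by
  suffices ∀ s t : Fin N, s < t → builtEdge B h s ≠ builtEdge B h t by
    intro s t hst
    by_contra hne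
    rcases lt_or_gt_of_ne hne with hlt | hlt
    exacts [this s t hlt hst, this t s hlt hst.symm]
  intro s t hst
  have := hB.2 ((List.ofFn h).take t) s (by simp [hst, t.isLt.le])
  rwa [List.take_take, min_eq_left (Fin.le_def.1 hst.le)] at this

lemma color_eq_of_isMonoClique (hB : ValidBuilder B) {S : Finset ℕ} {col : Bool}
    (hS : IsMonoClique B h S col) {t : Fin N} (ht : ∀ x ∈ builtEdge B h t, x ∈ S) :
    h t = col := by
  obtain ⟨⟨a, b⟩, hab⟩ := Quot.exists_rep (builtEdge B h t)
  have hab : builtEdge B h t = s(a, b) := hab.symm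
  have hne : a ≠ b := fun h' => hB.1 ((List.ofFn h).take t)
    (show (builtEdge B h t).IsDiag by rw [hab, h']; exact Sym2.mk_isDiag_iff.2 rfl)
  obtain ⟨t', ht', hcol⟩ := hS a (ht a (by simp [hab])) b (ht b (by simp [hab])) hne
  rwa [builtEdge_injective hB (ht'.trans hab.symm)] at hcol

lemma exists_builtEdge_mem_iff {S : Finset ℕ} {col : Bool} (hS : IsMonoClique B h S col)
    {e : Finset ℕ} (he : e ∈ S.powersetCard 2) :
    ∃ t, ∀ x, x ∈ builtEdge B h t ↔ x ∈ e := by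
  obtain ⟨heS, he2⟩ := mem_powersetCard.1 he
  obtain ⟨u, v, huv, rfl⟩ := card_eq_two.1 he2
  obtain ⟨t, ht, -⟩ := hS u (heS (by simp)) v (heS (by simp)) huv
  exact ⟨t, fun x => by simp [ht]⟩

lemma IsMonoClique.exists_mem_builtEdge {S : Finset ℕ} {col : Bool}
    (hS : IsMonoClique B h S col) (hS1 : 1 < #S) {v : ℕ} (hv : v ∈ S) :
    ∃ t, v ∈ builtEdge B h t := by
  obtain ⟨u, hu, huv⟩ := exists_mem_ne hS1 v
  obtain ⟨t, ht, -⟩ := hS v hv u hu huv.symm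
  exact ⟨t, by simp [ht]⟩

lemma exists_first_endpoint {v : ℕ} (hv : ∃ t, v ∈ builtEdge B h t) :
    ∃ p : Fin N × Bool, endpoint (builtEdge B h p.1) p.2 = v ∧
      ∀ t, v ∈ builtEdge B h t → p.1 ≤ t := by
  obtain ⟨t, ht, hmin⟩ := exists_min_image {t | v ∈ builtEdge B h t} id
    (let ⟨t, ht⟩ := hv; ⟨t, by simpa using ht⟩)
  obtain ⟨b, hb⟩ := exists_endpoint_eq (mem_filter.1 ht).2
  exact ⟨(t, b), hb, fun t' ht' => hmin t' (by simpa using ht')⟩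

lemma mem_of_revealed {S : Finset ℕ} {σ : (Fin c → Fin N) × (Fin k → Fin N × Bool)}
    (hσ₁ : ∀ j, ∀ x ∈ builtEdge B h (σ.1 j), x ∈ S)
    (hσ₂ : ∀ i, endpoint (builtEdge B h (σ.2 i).1) (σ.2 i).2 ∈ S) {t : Fin N} {x : ℕ}
    (hx : Revealed B σ h t x) : x ∈ S := by
  rcases hx with ⟨j, -, hx⟩ | ⟨i, -, rfl⟩
  exacts [hσ₁ j x hx, hσ₂ i]

lemma isRevealedEdge_of_not_mem_earlyPairs {S : Finset ℕ} {τ : Finset ℕ → Fin N}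
    (hτ : ∀ e ∈ S.powersetCard 2, ∀ x, x ∈ builtEdge B h (τ e) ↔ x ∈ e)
    {M : Finset (Finset ℕ)} (hM : IsPairMatching S M) {first : ℕ → Fin N × Bool}
    (hfirst : ∀ v ∈ S, endpoint (builtEdge B h (first v).1) (first v).2 = v ∧
      ∀ t, v ∈ builtEdge B h t → (first v).1 ≤ t)
    {σ : (Fin c → Fin N) × (Fin k → Fin N × Bool)}
    (hσ₁ : ∀ f ∈ M, ∃ j, σ.1 j = τ f)
    (hσ₂ : ∀ v ∈ S, (∀ f ∈ M, v ∉ f) → ∃ i, σ.2 i = first v)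
    {e : Finset ℕ} (he : e ∈ S.powersetCard 2 \ earlyPairs S (fun e => τ e) M) :
    IsRevealedEdge B σ h (τ e) := by
  obtain ⟨he, hnot⟩ := mem_sdiff.1 he
  intro x hx
  have hxe := (hτ e he x).1 hx
  by_cases hxM : ∃ f ∈ M, x ∈ f
  · obtain ⟨f, hf, hxf⟩ := hxM
    obtain ⟨j, hj⟩ := hσ₁ f hf
    refine Or.inl ⟨j, ?_, ?_⟩
    · rw [hj, ← not_lt]
      exact fun hlt =>
        hnot (mem_earlyPairs.2 ⟨he, f, hf, not_disjoint_iff.2 ⟨x, hxe, hxf⟩, hlt⟩)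
    · rw [hj, hτ f (hM.1 hf)]
      exact hxf
  · push Not at hxM
    have hxS := (mem_powersetCard.1 he).1 hxe
    obtain ⟨i, hi⟩ := hσ₂ x hxS hxM
    exact Or.inr ⟨i, hi ▸ (hfirst x hxS).2 _ hx, hi ▸ (hfirst x hxS).1⟩

/-- `σ.1` records when the `c` edges of a suitable matching of the clique are built, `σ.2` the
first appearance (turn and end) of each of the other `m - 2c` clique vertices. -/
theorem exists_slots_selectedAllEq (hB : ValidBuilder B) {m c : ℕ} {col : Bool} (hm : 2 ≤ m)
    (hc : 2 * c ≤ m) (hwin : ∃ S, #S = m ∧ IsMonoClique B h S col) :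
    ∃ σ : (Fin c → Fin N) × (Fin (m - 2 * c) → Fin N × Bool),
      SelectedAllEq (IsRevealedEdge B σ) (m.choose 2 - c * (c - 1)) col h := by
  obtain ⟨S, hSm, hS⟩ := hwin
  have : Nonempty (Fin N) := by
    obtain ⟨v, hv⟩ := card_pos.1 (by omega : 0 < #S)
    exact ⟨(hS.exists_mem_builtEdge (by omega) hv).choose⟩
  choose! τ hτ using fun e (he : e ∈ S.powersetCard 2) => exists_builtEdge_mem_iff hS he
  choose! first hfirst using fun v (hv : v ∈ S) =>
    exists_first_endpoint (hS.exists_mem_builtEdge (by omega) hv)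
  obtain ⟨M, hM, hMc, hearly⟩ :=
    exists_isPairMatching_card_earlyPairs_le (S := S) (fun e => (τ e : ℕ)) (hSm ▸ hc)
  obtain ⟨pairs, hpairsM, hpairs⟩ := exists_fin_enum M hMc
  obtain ⟨loners, hlonersS, hloners⟩ := exists_fin_enum (S \ M.biUnion id)
    (by rw [card_sdiff_of_subset hM.biUnion_subset, hM.card_biUnion, hMc, hSm])
  have hτinj : Set.InjOn τ (S.powersetCard 2 : Set (Finset ℕ)) := fun e he e' he' hee' =>
    ext fun x => (hτ e he x).symm.trans (hee' ▸ hτ e' he' x)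
  refine ⟨(τ ∘ pairs, first ∘ loners), ?_, fun t ht => color_eq_of_isMonoClique hB hS
    fun x hx => mem_of_revealed (fun j x hx => ?_) (fun i => ?_) (ht x hx)⟩
  · calc m.choose 2 - c * (c - 1)
        ≤ #(S.powersetCard 2 \ earlyPairs S (fun e => (τ e : ℕ)) M) := by
          rw [card_sdiff_of_subset earlyPairs_subset, card_powersetCard, hSm]
          omega
      _ = #((S.powersetCard 2 \ earlyPairs S (fun e => (τ e : ℕ)) M).image τ) :=
          (card_image_of_injOn (hτinj.mono (by simp))).symm
      _ ≤ _ := card_le_card <| image_subset_iff.2 fun e he => mem_filter.2 ⟨mem_univ _,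
          isRevealedEdge_of_not_mem_earlyPairs hτ hM hfirst
            (fun f hf => (hpairs f hf).imp fun j hj => by simp [hj])
            (fun v hv hvM => (hloners v (by simpa [hv] using hvM)).imp fun i hi => by simp [hi])
            he⟩
  · exact (mem_powersetCard.1 (hM.1 (hpairsM j))).1 ((hτ _ (hM.1 (hpairsM j)) x).1 hx)
  · have hv := (mem_sdiff.1 (hlonersS i)).1
    simpa [(hfirst _ hv).1] using hv

end Play

section RandomPainter

variable {N : ℕ} {B : List Bool → Sym2 ℕ}

theorem prob_isMonoClique_le (hB : ValidBuilder B) {q : Bool → ℝ} (hq0 : ∀ b, 0 ≤ q b)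
    (hq1 : ∑ b, q b = 1) {m c : ℕ} (hm : 2 ≤ m) (hc : 2 * c ≤ m) (col : Bool) :
    prob q (fun h : Fin N → Bool => ∃ S, #S = m ∧ IsMonoClique B h S col) ≤
      q col ^ (m.choose 2 - c * (c - 1)) * ((2 * N : ℕ) : ℝ) ^ (m - c) := by
  calc _ ≤ prob q fun h => ∃ σ : (Fin c → Fin N) × (Fin (m - 2 * c) → Fin N × Bool),
          SelectedAllEq (IsRevealedEdge B σ) (m.choose 2 - c * (c - 1)) col h :=
        prob_mono hq0 fun _ => exists_slots_selectedAllEq hB hm hc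
    _ ≤ ∑ σ : (Fin c → Fin N) × (Fin (m - 2 * c) → Fin N × Bool),
          q col ^ (m.choose 2 - c * (c - 1)) :=
        (prob_exists_le hq0 _).trans <| sum_le_sum fun σ _ =>
          prob_selectedAllEq_le hq0 hq1 col _ _ (isPredictable_isRevealedEdge B σ)
    _ = q col ^ (m.choose 2 - c * (c - 1)) * (N ^ c * (2 * N) ^ (m - 2 * c) : ℕ) := by
        simp; ring
    _ ≤ _ := by
        refine mul_le_mul_of_nonneg_left ?_ (pow_nonneg (hq0 col) _)
        calc ((N ^ c * (2 * N) ^ (m - 2 * c) : ℕ) : ℝ)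
            ≤ ((2 * N) ^ c * (2 * N) ^ (m - 2 * c) : ℕ) := by gcongr; omega
          _ = ((2 * N) ^ (m - c) : ℕ) := by rw [← pow_add]; congr 2; omega
          _ = _ := by push_cast; ring

def painterOf (h : Fin N → Bool) (g : List Bool) : Bool :=
  (List.ofFn h).getD g.length false

lemma histOf_painterOf (h : Fin N → Bool) {t : ℕ} (ht : t ≤ N) :
    histOf (painterOf h) t = (List.ofFn h).take t := by
  induction t with
  | zero => rfl
  | succ t ih =>
    rw [histOf, ih (by omega), List.take_add_one, painterOf]
    simp [show t < N by omega, min_eq_left (show t ≤ N by omega)]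

lemma exists_isMonoClique_of_hasMonoClique (h : Fin N → Bool) {k : ℕ} {col : Bool}
    (hwin : HasMonoClique (fun t => B (histOf (painterOf h) t))
      (fun t => painterOf h (histOf (painterOf h) t)) N k col) :
    ∃ S, #S = k ∧ IsMonoClique B h S col := by
  obtain ⟨S, hSk, hS⟩ := hwin
  refine ⟨S, hSk, fun u hu v hv huv => ?_⟩
  obtain ⟨t, ht, hedge, hcol⟩ := hS u hu v hv huv
  dsimp only at hedge hcol
  rw [histOf_painterOf h ht.le] at hedge hcol
  exact ⟨⟨t, ht⟩, hedge, by simpa [painterOf, ht, min_eq_left ht.le] using hcol⟩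

theorem not_builderWins {m n c d : ℕ} {p : ℝ} (hp0 : 0 ≤ p) (hp1 : p ≤ 1) (hm : 2 ≤ m)
    (hn : 2 ≤ n) (hc : 2 * c ≤ m) (hd : 2 * d ≤ n)
    (hbound : p ^ (m.choose 2 - c * (c - 1)) * ((2 * N : ℕ) : ℝ) ^ (m - c) +
      (1 - p) ^ (n.choose 2 - d * (d - 1)) * ((2 * N : ℕ) : ℝ) ^ (n - d) < 1) :
    ¬ BuilderWins m n N := by
  rintro ⟨B, hB, hwin⟩
  set q : Bool → ℝ := fun b => if b then p else 1 - p
  have hq0 : ∀ b, 0 ≤ q b := fun b => by cases b <;> simp [q] <;> linarith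
  have hq1 : ∑ b, q b = 1 := by simp [q]
  have := calc (1 : ℝ) = prob q fun _ : Fin N → Bool => True := (prob_true hq1 N).symm
    _ ≤ prob q fun h => (∃ S, #S = m ∧ IsMonoClique B h S true) ∨
          ∃ S, #S = n ∧ IsMonoClique B h S false :=
        prob_mono hq0 fun h _ => (hwin (painterOf h)).imp
          (exists_isMonoClique_of_hasMonoClique h) (exists_isMonoClique_of_hasMonoClique h)
    _ ≤ _ := prob_or_le hq0 _ _
  have hred := prob_isMonoClique_le (N := N) hB hq0 hq1 hm hc true
  have hblue := prob_isMonoClique_le (N := N) hB hq0 hq1 hn hd false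
  simp only [q, if_true, Bool.false_eq_true, if_false] at hred hblue
  linarith

end RandomPainter

section Ramsey

variable {α : Type*} [DecidableEq α]

def IsMonoOn (χ : Sym2 α → Bool) (S : Finset α) (col : Bool) : Prop :=
  ∀ u ∈ S, ∀ v ∈ S, u ≠ v → χ s(u, v) = col

lemma IsMonoOn.insert {χ : Sym2 α → Bool} {S : Finset α} {col : Bool} (hS : IsMonoOn χ S col)
    {v : α} (hv : ∀ u ∈ S, χ s(v, u) = col) : IsMonoOn χ (insert v S) col := by
  intro a ha b hb hab
  rcases mem_insert.1 ha with rfl | haS <;> rcases mem_insert.1 hb with rfl | hbS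
  · exact absurd rfl hab
  · exact hv b hbS
  · rw [Sym2.eq_swap]
    exact hv a haS
  · exact hS a haS b hbS hab

theorem exists_ramsey (k : Bool → ℕ) :
    ∃ R, ∀ (χ : Sym2 α → Bool) (V : Finset α), R ≤ #V →
      ∃ col, ∃ S ⊆ V, #S = k col ∧ IsMonoOn χ S col := by
  induction hk : k true + k false generalizing k with
  | zero =>
    exact ⟨0, fun _ _ _ => ⟨true, ∅, empty_subset _, by simp; omega, by simp [IsMonoOn]⟩⟩
  | succ s ih =>
    by_cases hk0 : ∃ col, k col = 0
    · obtain ⟨col, hcol⟩ := hk0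
      exact ⟨0, fun _ _ _ => ⟨col, ∅, empty_subset _, hcol.symm, by simp [IsMonoOn]⟩⟩
    push Not at hk0
    have hdec : ∀ b, ∃ R, ∀ (χ : Sym2 α → Bool) (V : Finset α), R ≤ #V →
        ∃ col, ∃ S ⊆ V, #S = Function.update k b (k b - 1) col ∧ IsMonoOn χ S col :=
      fun b => ih _ (by
        have := hk0 true
        have := hk0 false
        cases b <;> simp <;> omega)
    choose R hR using hdec
    refine ⟨1 + R true + R false, fun χ V hV => ?_⟩
    obtain ⟨v, hv⟩ := card_pos.1 (by omega : 0 < #V)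
    let nbrs (b : Bool) : Finset α := {u ∈ V.erase v | χ s(v, u) = b}
    have hsplit : #(nbrs true) + #(nbrs false) = #V - 1 := by
      rw [← card_erase_of_mem hv, ← card_filter_add_card_filter_not (s := V.erase v)
        (fun u => χ s(v, u) = true)]
      simp [nbrs]
    obtain ⟨b, hb⟩ : ∃ b, R b ≤ #(nbrs b) := by
      by_contra! h
      have := h true
      have := h false
      omega
    obtain ⟨col, S, hSb, hSk, hS⟩ := hR b χ (nbrs b) hb
    have hSV : S ⊆ V.erase v := hSb.trans (filter_subset _ _)
    by_cases hcol : col = b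
    · subst hcol
      refine ⟨col, insert v S, insert_subset hv (hSV.trans (erase_subset _ _)), ?_,
        hS.insert fun u hu => (mem_filter.1 (hSb hu)).2⟩
      rw [card_insert_of_notMem fun h => by simpa using hSV h, hSk]
      simp [Nat.sub_add_cancel (Nat.one_le_iff_ne_zero.2 (hk0 col))]
    · exact ⟨col, S, hSV.trans (erase_subset _ _), by simpa [hcol] using hSk, hS⟩

end Ramsey

/-- Writing `t = pair a b`, this enumerates every edge `{a, a + b + 1}` of `ℕ` exactly once. -/
def enumEdge (t : ℕ) : Sym2 ℕ :=
  s(t.unpair.1, t.unpair.1 + t.unpair.2 + 1)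

lemma enumEdge_injective : Function.Injective enumEdge := by
  intro t t' htt'
  rw [← Nat.pair_unpair t, ← Nat.pair_unpair t']
  rcases Sym2.eq_iff.1 htt' with ⟨h1, h2⟩ | ⟨h1, h2⟩ <;> congr 1 <;> omega

lemma enumEdge_pair {u v : ℕ} (huv : u < v) : enumEdge (Nat.pair u (v - u - 1)) = s(u, v) := by
  simp only [enumEdge, Nat.unpair_pair]
  congr 1
  omega

lemma histOf_length (P : List Bool → Bool) (t : ℕ) : (histOf P t).length = t := by
  induction t with
  | zero => rfl
  | succ t ih => simp [histOf, ih]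

lemma validBuilder_enumEdge : ValidBuilder fun g => enumEdge g.length := by
  refine ⟨fun g => ?_, fun g i hi h => ?_⟩
  · simp only [enumEdge, Sym2.mk_isDiag_iff]
    omega
  · have := enumEdge_injective h
    simp at this
    omega

lemma exists_builderWins (m n : ℕ) : ∃ N, BuilderWins m n N := by
  obtain ⟨R, hR⟩ := exists_ramsey (α := ℕ) fun b => if b then m else n
  refine ⟨R ^ 2, _, validBuilder_enumEdge, fun P => ?_⟩
  obtain ⟨col, S, hSR, hSk, hS⟩ :=
    hR (fun z => P (histOf P (Function.invFun enumEdge z))) (range R) (by simp)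
  have hclique : HasMonoClique (fun t => enumEdge (histOf P t).length) (fun t => P (histOf P t))
      (R ^ 2) #S col := by
    refine ⟨S, rfl, fun u hu v hv huv => ?_⟩
    wlog hlt : u < v generalizing u v
    · obtain ⟨t, ht, hedge, hcol⟩ := this v hv u hu huv.symm (by omega)
      exact ⟨t, ht, hedge.trans Sym2.eq_swap, hcol⟩
    have hu' := mem_range.1 (hSR hu)
    have hv' := mem_range.1 (hSR hv)
    refine ⟨Nat.pair u (v - u - 1), ?_, by simp [histOf_length, enumEdge_pair hlt], ?_⟩
    · calc _ < (max u (v - u - 1) + 1) ^ 2 := Nat.pair_lt_max_add_one_sq _ _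
        _ ≤ R ^ 2 := Nat.pow_le_pow_left (by omega) 2
    · have := hS u hu v hv huv
      rw [← enumEdge_pair hlt] at this
      simpa only [Function.leftInverse_invFun enumEdge_injective _] using this
  cases col
  · exact Or.inr (by simpa [hSk] using hclique)
  · exact Or.inl (by simpa [hSk] using hclique)

lemma BuilderWins.mono {m n N N' : ℕ} (hNN' : N ≤ N') (h : BuilderWins m n N) :
    BuilderWins m n N' := by
  obtain ⟨B, hB, hwin⟩ := h
  refine ⟨B, hB, fun P => (hwin P).imp ?_ ?_⟩ <;>
    exact fun ⟨S, hS, hclique⟩ => ⟨S, hS, fun u hu v hv huv =>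
      (hclique u hu v hv huv).imp fun t ht => ⟨ht.1.trans_le hNN', ht.2⟩⟩

lemma lt_onlineRamsey {m n N : ℕ} (h : ¬ BuilderWins m n N) : N < onlineRamsey m n := by
  by_contra! hle
  exact h (BuilderWins.mono hle (Nat.sInf_mem (exists_builderWins m n)))

lemma mul_sub_one_le_choose_two {m c : ℕ} (hc : 2 * c ≤ m) : c * (c - 1) ≤ m.choose 2 :=
  calc c * (c - 1) ≤ c * (2 * c - 1) := Nat.mul_le_mul_left c (by omega)
    _ = (2 * c).choose 2 := by
      rw [Nat.choose_two_right, mul_assoc, Nat.mul_div_cancel_left _ (by norm_num)]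
    _ ≤ m.choose 2 := Nat.choose_le_choose 2 hc

lemma rpow_mul_rpow_eq_pow_mul_pow (x y : ℝ) {m c : ℕ} (hc : 2 * c ≤ m) :
    x ^ ((m.choose 2 : ℝ) - (c : ℝ) * ((c : ℝ) - 1)) * y ^ ((m : ℝ) - (c : ℝ)) =
      x ^ (m.choose 2 - c * (c - 1)) * y ^ (m - c) := by
  have hcc : (c : ℝ) * ((c : ℝ) - 1) = ((c * (c - 1) : ℕ) : ℝ) := by
    cases c <;> push_cast <;> ring
  rw [hcc, ← Nat.cast_sub (mul_sub_one_le_choose_two hc), ← Nat.cast_sub (by omega : c ≤ m),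
    Real.rpow_natCast, Real.rpow_natCast]

lemma two_le_of_pow_mul_pow_lt_one {m c N : ℕ} (hN : 1 ≤ N) (hc : 2 * c ≤ m) {x : ℝ}
    (h : x ^ (m.choose 2 - c * (c - 1)) * ((2 * N : ℕ) : ℝ) ^ (m - c) < 1) : 2 ≤ m := by
  by_contra! hm
  obtain rfl : c = 0 := by omega
  have : (1 : ℝ) ≤ ((2 * N : ℕ) : ℝ) ^ m :=
    one_le_pow₀ (by exact_mod_cast (by omega : 1 ≤ 2 * N))
  simp only [Nat.choose_eq_zero_of_lt hm, zero_mul, Nat.sub_zero, pow_zero, one_mul] at h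
  linarith

theorem stmt0_general (m n N : ℕ) (hN : 1 ≤ N)
    (h : ∃ (p : ℝ) (c d : ℕ), p ∈ Set.Ioo (0 : ℝ) 1 ∧
      (c : ℝ) ≤ (m : ℝ) / 2 ∧ (d : ℝ) ≤ (n : ℝ) / 2 ∧
      p ^ ((m.choose 2 : ℝ) - (c : ℝ) * ((c : ℝ) - 1)) * ((2 * N : ℕ) : ℝ) ^ ((m : ℝ) - (c : ℝ)) +
        (1 - p) ^ ((n.choose 2 : ℝ) - (d : ℝ) * ((d : ℝ) - 1)) *
          ((2 * N : ℕ) : ℝ) ^ ((n : ℝ) - (d : ℝ)) ≤ 1 / 2) :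
    N < onlineRamsey m n := by
  obtain ⟨p, c, d, ⟨hp0, hp1⟩, hcm, hdn, hsum⟩ := h
  have hc : 2 * c ≤ m := by exact_mod_cast (by linarith : (2 * c : ℝ) ≤ m)
  have hd : 2 * d ≤ n := by exact_mod_cast (by linarith : (2 * d : ℝ) ≤ n)
  rw [rpow_mul_rpow_eq_pow_mul_pow _ _ hc, rpow_mul_rpow_eq_pow_mul_pow _ _ hd] at hsum
  have hred : 0 ≤ p ^ (m.choose 2 - c * (c - 1)) * ((2 * N : ℕ) : ℝ) ^ (m - c) := by
    positivity
  have hblue : 0 ≤ (1 - p) ^ (n.choose 2 - d * (d - 1)) * ((2 * N : ℕ) : ℝ) ^ (n - d) :=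
    mul_nonneg (pow_nonneg (by linarith) _) (by positivity)
  exact lt_onlineRamsey <| not_builderWins hp0.le hp1.le
    (two_le_of_pow_mul_pow_lt_one hN hc (by linarith))
    (two_le_of_pow_mul_pow_lt_one hN hd (by linarith)) hc hd (by linarith)

theorem stmt0 (m n N : ℕ) (hm : 1 ≤ m) (hn : 1 ≤ n) (hN : 1 ≤ N)
    (h : ∃ (p : ℝ) (c d : ℕ), p ∈ Set.Ioo (0 : ℝ) 1 ∧
      (c : ℝ) ≤ (m : ℝ) / 2 ∧ (d : ℝ) ≤ (n : ℝ) / 2 ∧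
      p ^ ((m.choose 2 : ℝ) - (c : ℝ) * ((c : ℝ) - 1)) * ((2 * N : ℕ) : ℝ) ^ ((m : ℝ) - (c : ℝ)) +
        (1 - p) ^ ((n.choose 2 : ℝ) - (d : ℝ) * ((d : ℝ) - 1)) *
          ((2 * N : ℕ) : ℝ) ^ ((n : ℝ) - (d : ℝ)) ≤ 1 / 2) :
    N < onlineRamsey m n :=
  stmt0_general m n N hN h

end OnlineRamseyGame
end

section
/- For all integers m, n ≥ 3 and every p ∈ (0,1): r̃(m,n;p) ≤ min{f(K_m, p), f(K_n, 1−p)} ≤ 3 · r̃(m,n;p). -/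
open scoped Classical

namespace OnlineRamseyGame

/-- The history (as a list) of the first `t` values of the color sequence `x`. -/
def histSeq (x : ℕ → Bool) (t : ℕ) : List Bool := (List.range t).map x

/-- Extend a finite color sequence to an infinite one (by `false`). -/
def extSeq {N : ℕ} (x : Fin N → Bool) : ℕ → Bool :=
  fun t => if h : t < N then x ⟨t, h⟩ else false

/-- The probability of the outcome `x` when each turn is independently `true`
with probability `p` and `false` with probability `1 - p`. -/
noncomputable def weight (p : ℝ) {N : ℕ} (x : Fin N → Bool) : ℝ :=
  ∏ i, if x i then p else 1 - p

/-- Builder strategy `B` wins the `(m,n)` game within `N` turns when Painter's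
colors are given by the sequence `x` (red = `true`, blue = `false`). -/
def WinsOn (B : List Bool → Sym2 ℕ) (x : ℕ → Bool) (m n N : ℕ) : Prop :=
  HasMonoClique (fun t => B (histSeq x t)) x N m true ∨
  HasMonoClique (fun t => B (histSeq x t)) x N n false

/-- The probability that Builder strategy `B` wins the `(m,n)` game within `N`
turns against the random Painter with parameter `p`. -/
noncomputable def winProb (B : List Bool → Sym2 ℕ) (m n N : ℕ) (p : ℝ) : ℝ :=
  ∑ x : Fin N → Bool, weight p x * (if WinsOn B (extSeq x) m n N then 1 else 0)

/-- The online Ramsey number `r̃(m,n;p)` against the random Painter with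
parameter `p`: the least `N` such that some valid Builder strategy wins within
`N` turns with probability at least `1/2`. -/
noncomputable def onlineRamseyP (m n : ℕ) (p : ℝ) : ℕ :=
  sInf {N | ∃ B : List Bool → Sym2 ℕ, ValidBuilder B ∧ (1 : ℝ) / 2 ≤ winProb B m n N p}

/-- The graph of successful queries (within the first `N` queries) contains a
copy of `H`. -/
def ContainsCopy {V : Type*} (H : SimpleGraph V) (edge : ℕ → Sym2 ℕ)
    (x : ℕ → Bool) (N : ℕ) : Prop :=
  ∃ f : V → ℕ, Function.Injective f ∧
    ∀ u v : V, H.Adj u v → ∃ t, t < N ∧ edge t = s(f u, f v) ∧ x t = true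

/-- The probability that strategy `Q` finds a copy of `H` within `N` queries in
the Subgraph Query Game with parameter `p`. -/
noncomputable def queryProb {V : Type*} (H : SimpleGraph V)
    (Q : List Bool → Sym2 ℕ) (N : ℕ) (p : ℝ) : ℝ :=
  ∑ x : Fin N → Bool, weight p x *
    (if ContainsCopy H (fun t => Q (histSeq (extSeq x) t)) (extSeq x) N then 1 else 0)

/-- `f(H,p)`: the least `N` such that some valid strategy finds a copy of `H`
within `N` queries with probability at least `1/2`. -/
noncomputable def fQuery {V : Type*} (H : SimpleGraph V) (p : ℝ) : ℕ :=
  sInf {N | ∃ Q : List Bool → Sym2 ℕ, ValidBuilder Q ∧ (1 : ℝ) / 2 ≤ queryProb H Q N p}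

/-- The complete graph on `m` vertices. -/
abbrev K (m : ℕ) : SimpleGraph (Fin m) := ⊤

-- basic helpers
lemma length_histSeq (x : ℕ → Bool) (t : ℕ) : (histSeq x t).length = t := by
  simp [histSeq]

lemma getElem_histSeq (x : ℕ → Bool) (t : ℕ) (j : ℕ) (hj : j < (histSeq x t).length) :
    (histSeq x t)[j] = x j := by
  simp [histSeq] at hj ⊢

lemma extSeq_lt {N : ℕ} (x : Fin N → Bool) {t : ℕ} (ht : t < N) :
    extSeq x t = x ⟨t, ht⟩ := by simp [extSeq, ht]

lemma weight_nonneg {p : ℝ} (h0 : 0 ≤ p) (h1 : p ≤ 1) {N : ℕ} (x : Fin N → Bool) :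
    0 ≤ weight p x := by
  refine Finset.prod_nonneg fun i _ => ?_
  by_cases h : x i <;> simp [h] <;> linarith

lemma sum_prod_bool {E : ℕ} (g : Bool → ℝ) :
    ∑ y : Fin E → Bool, ∏ j, g (y j) = (g true + g false) ^ E := by
  classical
  rw [← Fintype.piFinset_univ, ← Finset.prod_univ_sum (fun _ : Fin E => (Finset.univ : Finset Bool)) (fun _ b => g b)]
  rw [show (∑ b : Bool, g b) = g true + g false from Fintype.sum_bool g]
  simp

lemma sum_weight (p : ℝ) (N : ℕ) : ∑ x : Fin N → Bool, weight p x = 1 := by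
  have := sum_prod_bool (E := N) (fun b => if b then p else 1 - p)
  simp only [weight] at *
  rw [this]; norm_num

lemma sum_weight_allTrue (p : ℝ) (N : ℕ) :
    ∑ y : Fin N → Bool, weight p y * (if (∀ j, y j = true) then (1:ℝ) else 0) = p ^ N := by
  classical
  have key : ∀ y : Fin N → Bool,
      weight p y * (if (∀ j, y j = true) then (1:ℝ) else 0)
        = ∏ j, (if y j then p else 0) := by
    intro y
    by_cases h : ∀ j, y j = true
    · rw [if_pos h, mul_one]
      exact Finset.prod_congr rfl fun j _ => by simp [h j]
    · push_neg at h
      obtain ⟨j, hj⟩ := h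
      rw [if_neg, mul_zero]
      · exact (Finset.prod_eq_zero (Finset.mem_univ j) (by simp [hj])).symm
      · push_neg; exact ⟨j, hj⟩
  rw [Finset.sum_congr rfl fun y _ => key y,
    sum_prod_bool (fun b => if b then p else 0)]
  norm_num


-- blocks machinery
def block {k N : ℕ} (i : Fin k) (x : Fin (k * N) → Bool) : Fin N → Bool :=
  fun j => x ⟨i.val * N + j.val, by
    calc i.val * N + j.val < i.val * N + N := by omega
    _ = (i.val + 1) * N := by ring
    _ ≤ k * N := Nat.mul_le_mul_right N i.isLt⟩

lemma aux_posN {k N : ℕ} (t : Fin (k * N)) : 0 < N := by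
  rcases Nat.eq_zero_or_pos N with h | h
  · exact absurd t.isLt (by
      have hkN : k * N = 0 := by rw [h, Nat.mul_zero]
      omega)
  · exact h

lemma aux_div_lt {k N : ℕ} (t : Fin (k * N)) : t.val / N < k :=
  Nat.div_lt_of_lt_mul (lt_of_lt_of_le t.isLt (le_of_eq (Nat.mul_comm k N)))

noncomputable def joinB {k N : ℕ} (F : Fin k → Fin N → Bool) : Fin (k * N) → Bool :=
  fun t => F ⟨t.val / N, aux_div_lt t⟩ ⟨t.val % N, Nat.mod_lt _ (aux_posN t)⟩

lemma block_joinB {k N : ℕ} (F : Fin k → Fin N → Bool) (i : Fin k) :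
    block i (joinB F) = F i := by
  funext j
  have hN : 0 < N := j.pos
  simp only [block, joinB]
  have h1 : (i.val * N + j.val) / N = i.val := by
    rw [Nat.add_comm, Nat.add_mul_div_right _ _ hN, Nat.div_eq_of_lt j.isLt, Nat.zero_add]
  have h2 : (i.val * N + j.val) % N = j.val := by
    rw [Nat.add_comm, Nat.mul_comm, Nat.add_mul_mod_self_left, Nat.mod_eq_of_lt j.isLt]
  rw [show (⟨(i.val * N + j.val) / N, _⟩ : Fin k) = i from Fin.ext h1,
    show (⟨(i.val * N + j.val) % N, _⟩ : Fin N) = j from Fin.ext h2]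

lemma joinB_block {k N : ℕ} (x : Fin (k * N) → Bool) :
    joinB (fun i => block i x) = x := by
  funext t
  simp only [block, joinB]
  congr 1
  exact Fin.ext (by simp [Nat.div_add_mod'])

noncomputable def joinEquiv (k N : ℕ) : (Fin k → Fin N → Bool) ≃ (Fin (k * N) → Bool) where
  toFun := joinB
  invFun := fun x i => block i x
  left_inv := fun F => funext fun i => block_joinB F i
  right_inv := joinB_block

noncomputable def idxEquiv (k N : ℕ) : Fin k × Fin N ≃ Fin (k * N) where
  toFun q := ⟨q.1.val * N + q.2.val, by
    calc q.1.val * N + q.2.val < q.1.val * N + N := by omega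
    _ = (q.1.val + 1) * N := by ring
    _ ≤ k * N := Nat.mul_le_mul_right N q.1.isLt⟩
  invFun t := (⟨t.val / N, aux_div_lt t⟩, ⟨t.val % N, Nat.mod_lt _ (aux_posN t)⟩)
  left_inv := by
    rintro ⟨i, j⟩
    have hN : 0 < N := j.pos
    have h1 : (i.val * N + j.val) / N = i.val := by
      rw [Nat.add_comm, Nat.add_mul_div_right _ _ hN, Nat.div_eq_of_lt j.isLt, Nat.zero_add]
    have h2 : (i.val * N + j.val) % N = j.val := by
      rw [Nat.add_comm, Nat.mul_comm, Nat.add_mul_mod_self_left, Nat.mod_eq_of_lt j.isLt]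
    simp only [Prod.mk.injEq]
    exact ⟨Fin.ext h1, Fin.ext h2⟩
  right_inv := by
    intro t
    exact Fin.ext (by simp [Nat.div_add_mod'])

lemma joinB_idxEquiv {k N : ℕ} (F : Fin k → Fin N → Bool) (i : Fin k) (j : Fin N) :
    joinB F (idxEquiv k N (i, j)) = F i j := by
  have := congrFun (block_joinB F i) j
  simpa [block, idxEquiv] using this

lemma weight_joinB (p : ℝ) {k N : ℕ} (F : Fin k → Fin N → Bool) :
    weight p (joinB F) = ∏ i, weight p (F i) := by
  classical
  unfold weight
  rw [← Equiv.prod_comp (idxEquiv k N) (fun t => if joinB F t then p else 1 - p)]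
  rw [Fintype.prod_prod_type]
  exact Finset.prod_congr rfl fun i _ =>
    Finset.prod_congr rfl fun j _ => by rw [joinB_idxEquiv]

lemma sum_blocks (p : ℝ) (k N : ℕ) (g : Fin k → (Fin N → Bool) → ℝ) :
    ∑ x : Fin (k * N) → Bool, weight p x * ∏ i, g i (block i x)
      = ∏ i, ∑ y : Fin N → Bool, weight p y * g i y := by
  classical
  rw [← Equiv.sum_comp (joinEquiv k N)
    (fun x => weight p x * ∏ i, g i (block i x))]
  have : ∀ F : Fin k → Fin N → Bool,
      weight p (joinEquiv k N F) * ∏ i, g i (block i (joinEquiv k N F))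
        = ∏ i, (weight p (F i) * g i (F i)) := by
    intro F
    simp only [joinEquiv, Equiv.coe_fn_mk]
    rw [weight_joinB, ← Finset.prod_mul_distrib]
    exact Finset.prod_congr rfl fun i _ => by rw [block_joinB]
  rw [Finset.sum_congr rfl fun F _ => this F]
  rw [← Fintype.piFinset_univ,
    ← Finset.prod_univ_sum (fun _ => (Finset.univ : Finset (Fin N → Bool)))
      (fun i y => weight p y * g i y)]

-- master lemma
lemma sum_ind_le_one {p : ℝ} (hp0 : 0 ≤ p) (hp1 : p ≤ 1) {N : ℕ}
    (P : (Fin N → Bool) → Prop) :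
    ∑ y : Fin N → Bool, weight p y * (if P y then (1:ℝ) else 0) ≤ 1 := by
  classical
  refine le_trans (Finset.sum_le_sum fun y _ => ?_) (le_of_eq (sum_weight p N))
  refine mul_le_of_le_one_right (weight_nonneg hp0 hp1 y) ?_
  by_cases h : P y <;> simp [h]

lemma sum_ind_nonneg {p : ℝ} (hp0 : 0 ≤ p) (hp1 : p ≤ 1) {N : ℕ}
    (P : (Fin N → Bool) → Prop) :
    0 ≤ ∑ y : Fin N → Bool, weight p y * (if P y then (1:ℝ) else 0) := by
  classical
  refine Finset.sum_nonneg fun y _ => mul_nonneg (weight_nonneg hp0 hp1 y) ?_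
  by_cases h : P y <;> simp [h]

lemma master (p : ℝ) (hp0 : 0 ≤ p) (hp1 : p ≤ 1) (k N : ℕ)
    (A : Fin k → (Fin N → Bool) → Prop) (Tgt : (Fin (k * N) → Bool) → Prop)
    (hAT : ∀ (x : Fin (k * N) → Bool) (i : Fin k), A i (block i x) → Tgt x)
    (a : ℝ)
    (ha : ∀ i, a ≤ ∑ y : Fin N → Bool, weight p y * (if A i y then 1 else 0)) :
    1 - (1 - a) ^ k ≤ ∑ x : Fin (k * N) → Bool, weight p x * (if Tgt x then 1 else 0) := by
  classical
  have hwnn : ∀ {M : ℕ} (x : Fin M → Bool), 0 ≤ weight p x := fun x => weight_nonneg hp0 hp1 x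
  have step1 : ∑ x : Fin (k * N) → Bool,
      weight p x * (1 - ∏ i, (1 - (if A i (block i x) then (1:ℝ) else 0)))
      ≤ ∑ x : Fin (k * N) → Bool, weight p x * (if Tgt x then 1 else 0) := by
    refine Finset.sum_le_sum fun x _ => mul_le_mul_of_nonneg_left ?_ (hwnn x)
    by_cases hT : Tgt x
    · rw [if_pos hT]
      have : (0:ℝ) ≤ ∏ i, (1 - (if A i (block i x) then (1:ℝ) else 0)) := by
        refine Finset.prod_nonneg fun i _ => ?_
        by_cases h : A i (block i x) <;> simp [h]
      linarith
    · rw [if_neg hT]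
      have : ∏ i, (1 - (if A i (block i x) then (1:ℝ) else 0)) = 1 := by
        refine Finset.prod_eq_one fun i _ => ?_
        rw [if_neg fun h => hT (hAT x i h)]; ring
      rw [this]; simp
  have step2 : ∑ x : Fin (k * N) → Bool,
      weight p x * (1 - ∏ i, (1 - (if A i (block i x) then (1:ℝ) else 0)))
      = 1 - ∏ i : Fin k, (1 - ∑ y : Fin N → Bool, weight p y * (if A i y then 1 else 0)) := by
    have e1 : ∀ x : Fin (k * N) → Bool,
        weight p x * (1 - ∏ i, (1 - (if A i (block i x) then (1:ℝ) else 0)))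
          = weight p x - weight p x * ∏ i, ((1:ℝ) - (if A i (block i x) then 1 else 0)) := by
      intro x; ring
    rw [Finset.sum_congr rfl fun x _ => e1 x, Finset.sum_sub_distrib, sum_weight,
      sum_blocks p k N (fun i y => (1:ℝ) - (if A i y then 1 else 0))]
    congr 1
    refine Finset.prod_congr rfl fun i _ => ?_
    have e2 : ∀ y : Fin N → Bool,
        weight p y * ((1:ℝ) - (if A i y then 1 else 0))
          = weight p y - weight p y * (if A i y then 1 else 0) := fun y => by ring
    rw [Finset.sum_congr rfl fun y _ => e2 y, Finset.sum_sub_distrib, sum_weight]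
  have step3 : ∏ i : Fin k, (1 - ∑ y : Fin N → Bool, weight p y * (if A i y then 1 else 0))
      ≤ (1 - a) ^ k := by
    rw [show ((1:ℝ) - a) ^ k = ∏ _i : Fin k, (1 - a) by
      rw [Finset.prod_const, Finset.card_univ, Fintype.card_fin]]
    refine Finset.prod_le_prod (fun i _ => ?_) (fun i _ => ?_)
    · have := sum_ind_le_one hp0 hp1 (fun y => A i y)
      linarith
    · have := ha i; linarith
  linarith

-- the clique/copy correspondence
lemma containsCopy_iff {m : ℕ} (edge : ℕ → Sym2 ℕ) (x : ℕ → Bool) (N : ℕ) :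
    ContainsCopy (K m) edge x N ↔ HasMonoClique edge x N m true := by
  classical
  constructor
  · rintro ⟨f, hf, hpair⟩
    refine ⟨Finset.image f Finset.univ, ?_, ?_⟩
    · rw [Finset.card_image_of_injective _ hf, Finset.card_univ, Fintype.card_fin]
    · intro u hu v hv huv
      obtain ⟨a, -, rfl⟩ := Finset.mem_image.1 hu
      obtain ⟨b, -, rfl⟩ := Finset.mem_image.1 hv
      have hab : a ≠ b := fun h => huv (by rw [h])
      exact hpair a b (by simpa using hab)
  · rintro ⟨S, hcard, hcl⟩
    refine ⟨fun a => ((S.orderIsoOfFin hcard a : S) : ℕ), ?_, ?_⟩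
    · intro a b hab
      exact (S.orderIsoOfFin hcard).injective (Subtype.ext hab)
    · intro u v huv
      have huv' : u ≠ v := by simpa using huv
      refine hcl _ (S.orderIsoOfFin hcard u).2 _ (S.orderIsoOfFin hcard v).2 ?_
      intro h
      exact huv' ((S.orderIsoOfFin hcard).injective (Subtype.ext h))

-- nonadaptive strategies
def nonadapt (e : ℕ → Sym2 ℕ) : List Bool → Sym2 ℕ := fun h => e h.length

lemma valid_nonadapt {e : ℕ → Sym2 ℕ} (hinj : Function.Injective e)
    (hd : ∀ t, ¬ (e t).IsDiag) : ValidBuilder (nonadapt e) := by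
  constructor
  · intro h; exact hd _
  · intro h i hi hne
    have : i = h.length := hinj (by simpa [nonadapt, List.length_take, Nat.min_eq_left hi.le] using hne)
    omega

lemma edge_nonadapt (e : ℕ → Sym2 ℕ) (X : ℕ → Bool) :
    (fun t => nonadapt e (histSeq X t)) = e := by
  funext t; simp [nonadapt, length_histSeq]

-- the "disjoint copies of K_m" strategy
lemma sym2_rep {α : Type*} (z : Sym2 α) : ∃ a b, z = s(a, b) :=
  z.inductionOn fun x y => ⟨x, y, rfl⟩

lemma emb_inj_pair {m : ℕ} (hm : 0 < m) {q q' : ℕ} {a b : Fin m}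
    (h : q * m + a.val = q' * m + b.val) : q = q' ∧ a = b := by
  have h1 : (q * m + a.val) / m = q := by
    rw [Nat.add_comm, Nat.add_mul_div_right _ _ hm, Nat.div_eq_of_lt a.isLt, Nat.zero_add]
  have h2 : (q' * m + b.val) / m = q' := by
    rw [Nat.add_comm, Nat.add_mul_div_right _ _ hm, Nat.div_eq_of_lt b.isLt, Nat.zero_add]
  have hq : q = q' := by rw [← h1, ← h2, h]
  subst hq
  exact ⟨rfl, Fin.ext (by omega)⟩

lemma copies_exists (m : ℕ) (hm : 3 ≤ m) :
    ∃ E : ℕ, 0 < E ∧ ∃ e : ℕ → Sym2 ℕ, Function.Injective e ∧ (∀ t, ¬ (e t).IsDiag) ∧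
      ∀ (k : ℕ) (x : Fin (k * E) → Bool) (i : Fin k),
        (∀ j, block i x j = true) → HasMonoClique e (extSeq x) (k * E) m true := by
  classical
  have hm0 : 0 < m := by omega
  set D : Finset (Sym2 (Fin m)) := Finset.univ.filter (fun z => ¬ z.IsDiag) with hD
  set L : List (Sym2 (Fin m)) := D.toList with hL
  set E : ℕ := L.length with hEdef
  have hmem : ∀ a b : Fin m, a ≠ b → s(a, b) ∈ L := by
    intro a b hab
    rw [hL, Finset.mem_toList, hD, Finset.mem_filter]
    exact ⟨Finset.mem_univ _, by rw [Sym2.mk_isDiag_iff]; simpa using hab⟩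
  have hE : 0 < E := by
    have h01 : (⟨0, by omega⟩ : Fin m) ≠ (⟨1, by omega⟩ : Fin m) := by
      intro h; simpa using congrArg Fin.val h
    have := hmem _ _ h01
    rw [hEdef]
    exact List.length_pos_of_mem this
  have hnodup : L.Nodup := D.nodup_toList
  have hndiag : ∀ r : Fin L.length, ¬ (L.get r).IsDiag := by
    intro r
    have h1 : L.get r ∈ L := by simpa using L.get_mem r.1 r.2
    have h2 : L.get r ∈ D := Finset.mem_toList.1 h1
    exact (Finset.mem_filter.1 h2).2
  set emb : ℕ → Fin m → ℕ := fun q v => q * m + v.val with hemb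
  set e : ℕ → Sym2 ℕ := fun t =>
    Sym2.map (emb (t / E)) (L.get ⟨t % E, Nat.mod_lt _ hE⟩) with he
  have embinj : ∀ q, Function.Injective (emb q) := by
    intro q a b h
    exact (emb_inj_pair hm0 h).2
  have keyrep : ∀ t : ℕ, ∀ a b : Fin m, L.get ⟨t % E, Nat.mod_lt _ hE⟩ = s(a, b) →
      e t = s(emb (t / E) a, emb (t / E) b) := by
    intro t a b hab
    rw [he]; simp only [hab, Sym2.map_pair_eq]
  refine ⟨E, hE, e, ?_, ?_, ?_⟩
  · -- injectivity
    intro t t' htt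
    obtain ⟨a, b, hab⟩ := sym2_rep (L.get ⟨t % E, Nat.mod_lt _ hE⟩)
    obtain ⟨c, d, hcd⟩ := sym2_rep (L.get ⟨t' % E, Nat.mod_lt _ hE⟩)
    rw [keyrep t a b hab, keyrep t' c d hcd] at htt
    rw [Sym2.eq_iff] at htt
    have hq : t / E = t' / E ∧ (a = c ∧ b = d ∨ a = d ∧ b = c) := by
      rcases htt with ⟨h1, h2⟩ | ⟨h1, h2⟩
      · obtain ⟨hq1, ha1⟩ := emb_inj_pair hm0 h1
        obtain ⟨-, hb1⟩ := emb_inj_pair hm0 h2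
        exact ⟨hq1, Or.inl ⟨ha1, hb1⟩⟩
      · obtain ⟨hq1, ha1⟩ := emb_inj_pair hm0 h1
        obtain ⟨-, hb1⟩ := emb_inj_pair hm0 h2
        exact ⟨hq1, Or.inr ⟨ha1, hb1⟩⟩
    have hgets : L.get ⟨t % E, Nat.mod_lt _ hE⟩ = L.get ⟨t' % E, Nat.mod_lt _ hE⟩ := by
      rw [hab, hcd]
      rcases hq.2 with ⟨h1, h2⟩ | ⟨h1, h2⟩
      · rw [h1, h2]
      · rw [h1, h2, Sym2.eq_swap]
    have hr : t % E = t' % E := by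
      have := List.nodup_iff_injective_get.1 hnodup hgets
      simpa using congrArg Fin.val this
    rw [← Nat.div_add_mod t E, ← Nat.div_add_mod t' E, hq.1, hr]
  · -- no diagonal
    intro t
    rw [he]
    simp only
    rw [Sym2.isDiag_map (embinj _)]
    exact hndiag _
  · -- the clique property
    intro k x i hall
    refine ⟨Finset.image (fun v : Fin m => emb i.val v) Finset.univ, ?_, ?_⟩
    · rw [Finset.card_image_of_injective _ (embinj _), Finset.card_univ, Fintype.card_fin]
    · intro u hu v hv huv
      obtain ⟨a, -, rfl⟩ := Finset.mem_image.1 hu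
      obtain ⟨b, -, rfl⟩ := Finset.mem_image.1 hv
      have hab : a ≠ b := fun h => huv (by rw [h])
      have hmemab := hmem a b hab
      set r : ℕ := L.idxOf s(a, b) with hr
      have hrE : r < E := by rw [hEdef, hr]; exact List.idxOf_lt_length_iff.2 hmemab
      have hget : L.get ⟨r % E, Nat.mod_lt _ hE⟩ = s(a, b) := by
        have : r % E = r := Nat.mod_eq_of_lt hrE
        simp only [this]
        exact List.getElem_idxOf (by rw [← hEdef]; exact hrE)
      refine ⟨i.val * E + r, ?_, ?_, ?_⟩
      · calc i.val * E + r < i.val * E + E := by omega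
        _ = (i.val + 1) * E := by ring
        _ ≤ k * E := Nat.mul_le_mul_right E i.isLt
      · have hdiv : (i.val * E + r) / E = i.val := by
          rw [Nat.add_comm, Nat.add_mul_div_right _ _ hE, Nat.div_eq_of_lt hrE, Nat.zero_add]
        have hmod : (i.val * E + r) % E = r % E := by
          rw [Nat.add_comm, Nat.mul_comm, Nat.add_mul_mod_self_left]
        have := keyrep (i.val * E + r) a b (by rw [show (⟨(i.val * E + r) % E, _⟩ : Fin L.length) = ⟨r % E, Nat.mod_lt _ hE⟩ from Fin.ext hmod]; exact hget)
        rw [this, hdiv]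
      · have hlt : i.val * E + r < k * E := by
          calc i.val * E + r < i.val * E + E := by omega
          _ = (i.val + 1) * E := by ring
          _ ≤ k * E := Nat.mul_le_mul_right E i.isLt
        rw [extSeq_lt x hlt]
        exact hall ⟨r, hrE⟩

lemma copies_master (m : ℕ) (hm : 3 ≤ m) (p : ℝ) (hp : p ∈ Set.Ioo (0:ℝ) 1) :
    ∃ (M : ℕ) (e : ℕ → Sym2 ℕ), Function.Injective e ∧ (∀ t, ¬ (e t).IsDiag) ∧
      (1:ℝ)/2 ≤ ∑ x : Fin M → Bool, weight p x *
        (if HasMonoClique e (extSeq x) M m true then 1 else 0) := by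
  obtain ⟨hp0, hp1⟩ := hp
  obtain ⟨E, hE, e, heinj, hed, hclique⟩ := copies_exists m hm
  have hpE : 0 < p ^ E := pow_pos hp0 E
  have hpE1 : p ^ E ≤ 1 := pow_le_one₀ hp0.le hp1.le
  obtain ⟨k, hk⟩ := exists_pow_lt_of_lt_one (show (0:ℝ) < 1/2 by norm_num)
    (show 1 - p ^ E < 1 by linarith)
  refine ⟨k * E, e, heinj, hed, ?_⟩
  have hmaster := master p hp0.le hp1.le k E
    (fun _ y => ∀ j, y j = true)
    (fun x => HasMonoClique e (extSeq x) (k * E) m true)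
    (fun x i h => hclique k x i h)
    (p ^ E)
    (fun i => by
      refine le_of_eq ?_
      rw [← sum_weight_allTrue p E]
      exact Finset.sum_congr rfl fun y _ => by
        congr!)
  calc (1:ℝ)/2 ≤ 1 - (1 - p ^ E) ^ k := by linarith
  _ ≤ _ := hmaster

-- flip helpers
lemma weight_flip (p : ℝ) {N : ℕ} (x : Fin N → Bool) :
    weight p (fun i => !x i) = weight (1 - p) x := by
  unfold weight
  refine Finset.prod_congr rfl fun i _ => ?_
  cases hx : x i <;> simp [hx, sub_sub_cancel]

lemma histSeq_extSeq_flip {N : ℕ} (x : Fin N → Bool) {t : ℕ} (ht : t ≤ N) :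
    histSeq (extSeq (fun i => !x i)) t = (histSeq (extSeq x) t).map not := by
  apply List.ext_getElem
  · simp [length_histSeq]
  · intro s hs1 hs2
    rw [length_histSeq] at hs1
    have hsN : s < N := lt_of_lt_of_le hs1 ht
    rw [getElem_histSeq, List.getElem_map, getElem_histSeq]
    rw [extSeq_lt _ hsN, extSeq_lt x hsN]

lemma flipEquiv (N : ℕ) : Function.Involutive (fun (x : Fin N → Bool) i => !x i) := by
  intro x; funext i; simp

-- simulation of a Builder strategy in the query game: three independent runs
lemma query_of_red (m N : ℕ) (p : ℝ) (hp0 : 0 ≤ p) (hp1 : p ≤ 1)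
    (B : List Bool → Sym2 ℕ) (hB : ValidBuilder B)
    (ha : (1:ℝ)/4 ≤ ∑ x : Fin N → Bool, weight p x *
        (if HasMonoClique (fun t => B (histSeq (extSeq x) t)) (extSeq x) N m true
          then 1 else 0)) :
    fQuery (K m) p ≤ 3 * N := by
  classical
  set emb : ℕ → ℕ → ℕ := fun i v => 4 * v + i with hembdef
  have embinj : ∀ i, Function.Injective (emb i) := by
    intro i a b h
    simp only [hembdef] at h
    omega
  set Q : List Bool → Sym2 ℕ := fun h =>
    if h.length < 3 * N then
      Sym2.map (emb (h.length / N)) (B (h.drop (h.length / N * N)))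
    else s(4 * h.length + 3, 4 * (h.length + 1) + 3) with hQdef
  -- validity
  have hQvalid : ValidBuilder Q := by
    constructor
    · intro h
      rw [hQdef]
      simp only
      split
      · rw [Sym2.isDiag_map (embinj _)]
        exact hB.1 _
      · rw [Sym2.mk_isDiag_iff]
        omega
    · intro h i hi heq
      have hlt : (h.take i).length = i := by
        rw [List.length_take]; omega
      rw [hQdef] at heq
      simp only [hlt] at heq
      by_cases h3 : h.length < 3 * N
      · -- both are run edges
        have hi3 : i < 3 * N := by omega
        have hN : 0 < N := by omega
        have hq : i / N < 3 := (Nat.div_lt_iff_lt_mul hN).2 hi3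
        have hq' : h.length / N < 3 := (Nat.div_lt_iff_lt_mul hN).2 h3
        rw [if_pos hi3, if_pos h3] at heq
        by_cases hqq : i / N = h.length / N
        · rw [hqq] at heq
          have hBeq := Sym2.map.injective (embinj _) heq
          rw [List.drop_take] at hBeq
          have hle1 : h.length / N * N ≤ i := by
            rw [← hqq]; exact Nat.div_mul_le_self i N
          refine hB.2 (h.drop (h.length / N * N)) (i - h.length / N * N) ?_ hBeq
          rw [List.length_drop]
          omega
        · obtain ⟨a, b, hab⟩ := sym2_rep (B ((h.take i).drop (i / N * N)))
          obtain ⟨c, d, hcd⟩ := sym2_rep (B (h.drop (h.length / N * N)))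
          rw [hab, hcd, Sym2.map_pair_eq, Sym2.map_pair_eq, Sym2.eq_iff] at heq
          simp only [hembdef] at heq
          generalize hg1 : i / N = q1 at hq hqq heq
          generalize hg2 : h.length / N = q2 at hq' hqq heq
          omega
      · by_cases hi3 : i < 3 * N
        · -- run edge vs fresh edge
          have hN : 0 < N := by omega
          have hq : i / N < 3 := (Nat.div_lt_iff_lt_mul hN).2 hi3
          rw [if_pos hi3, if_neg h3] at heq
          obtain ⟨a, b, hab⟩ := sym2_rep (B ((h.take i).drop (i / N * N)))
          rw [hab, Sym2.map_pair_eq, Sym2.eq_iff] at heq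
          simp only [hembdef] at heq
          generalize hg1 : i / N = q1 at hq heq
          omega
        · rw [if_neg hi3, if_neg h3, Sym2.eq_iff] at heq
          omega
  -- the probability bound via three independent runs
  have hmaster := master p hp0 hp1 3 N
    (fun _ y => HasMonoClique (fun t => B (histSeq (extSeq y) t)) (extSeq y) N m true)
    (fun x => ContainsCopy (K m) (fun t => Q (histSeq (extSeq x) t)) (extSeq x) (3 * N))
    ?_ (1/4)
    (fun i => le_trans ha (le_of_eq (Finset.sum_congr rfl fun y _ => by congr!)))
  · -- conclude
    refine Nat.sInf_le ⟨Q, hQvalid, ?_⟩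
    have h12 : (1:ℝ)/2 ≤ 1 - (1 - 1/4) ^ 3 := by norm_num
    refine le_trans h12 (le_trans hmaster (le_of_eq ?_))
    unfold queryProb
    exact Finset.sum_congr rfl fun y _ => by congr!
  · -- a red clique in run `i` yields a copy of K_m
    intro x i hA
    rw [containsCopy_iff]
    obtain ⟨S, hcard, hcl⟩ := hA
    refine ⟨S.image (emb i.val), ?_, ?_⟩
    · rw [Finset.card_image_of_injective _ (embinj _), hcard]
    · intro u hu v hv huv
      obtain ⟨a, haS, rfl⟩ := Finset.mem_image.1 hu
      obtain ⟨b, hbS, rfl⟩ := Finset.mem_image.1 hv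
      have hab : a ≠ b := fun h => huv (by rw [h])
      obtain ⟨s, hsN, hedge, hcol⟩ := hcl a haS b hbS hab
      have ht3 : i.val * N + s < 3 * N := by
        calc i.val * N + s < i.val * N + N := by omega
        _ = (i.val + 1) * N := by ring
        _ ≤ 3 * N := Nat.mul_le_mul_right N i.isLt
      refine ⟨i.val * N + s, ht3, ?_, ?_⟩
      · -- the built edge is the right one
        have hlen : (histSeq (extSeq x) (i.val * N + s)).length = i.val * N + s :=
          length_histSeq _ _
        have hdiv : (i.val * N + s) / N = i.val := by
          have hN : 0 < N := by omega
          rw [Nat.add_comm, Nat.add_mul_div_right _ _ hN, Nat.div_eq_of_lt hsN, Nat.zero_add]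
        have hdrop : (histSeq (extSeq x) (i.val * N + s)).drop (i.val * N)
            = histSeq (extSeq (block i x)) s := by
          apply List.ext_getElem
          · rw [List.length_drop, length_histSeq, length_histSeq]; omega
          · intro j hj1 hj2
            rw [List.length_drop, length_histSeq] at hj1
            have hjs : j < s := by omega
            rw [List.getElem_drop, getElem_histSeq, getElem_histSeq]
            have hx1 : i.val * N + j < 3 * N := by omega
            have hx2 : j < N := by omega
            rw [extSeq_lt x hx1, extSeq_lt (block i x) hx2]
            rfl
        rw [hQdef]
        simp only [hlen, if_pos ht3, hdiv, hdrop, hedge, Sym2.map_pair_eq]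
      · -- the color is `true`
        rw [extSeq_lt x ht3]
        have : extSeq (block i x) s = block i x ⟨s, hsN⟩ := extSeq_lt _ hsN
        rw [this] at hcol
        exact hcol

-- small indicator helpers
lemma ite_of_iff {P Q : Prop} [Decidable P] [Decidable Q] (h : P ↔ Q) :
    (if P then (1:ℝ) else 0) = if Q then 1 else 0 := by
  split <;> split <;> first | rfl | (exfalso; tauto)

lemma ite_le_ite {P Q : Prop} [Decidable P] [Decidable Q] (h : P → Q) :
    (if P then (1:ℝ) else 0) ≤ if Q then 1 else 0 := by
  by_cases hP : P
  · rw [if_pos hP, if_pos (h hP)]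
  · rw [if_neg hP]
    split <;> norm_num

lemma sum_flip {N : ℕ} (f : (Fin N → Bool) → ℝ) :
    ∑ x : Fin N → Bool, f x = ∑ x : Fin N → Bool, f (fun i => !x i) :=
  (Equiv.sum_comp (Function.Involutive.toPerm _ (flipEquiv N)) f).symm

lemma hist_flip_not {N : ℕ} (x : Fin N → Bool) {t : ℕ} (ht : t ≤ N) :
    (histSeq (extSeq (fun i => !x i)) t).map not = histSeq (extSeq x) t := by
  rw [histSeq_extSeq_flip x ht, List.map_map]
  simp [Function.comp_def]

lemma clique_transfer {n' N : ℕ} {e1 e2 : ℕ → Sym2 ℕ} {c1 c2 : ℕ → Bool} {col1 col2 : Bool}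
    (he : ∀ t, t < N → e1 t = e2 t) (hc : ∀ t, t < N → (c1 t = col1 ↔ c2 t = col2)) :
    HasMonoClique e1 c1 N n' col1 → HasMonoClique e2 c2 N n' col2 := by
  rintro ⟨S, hcard, hcl⟩
  refine ⟨S, hcard, fun u hu v hv huv => ?_⟩
  obtain ⟨t, ht, hedge, hcol⟩ := hcl u hu v hv huv
  exact ⟨t, ht, by rw [← he t ht]; exact hedge, (hc t ht).1 hcol⟩

lemma extSeq_flip_iff {N : ℕ} (x : Fin N → Bool) {t : ℕ} (ht : t < N) (c : Bool) :
    (extSeq x t = c ↔ extSeq (fun i => !x i) t = !c) := by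
  rw [extSeq_lt x ht, extSeq_lt (fun i => !x i) ht]
  cases hx : x ⟨t, ht⟩ <;> cases c <;> simp

lemma flip_valid {Q : List Bool → Sym2 ℕ} (hQ : ValidBuilder Q) :
    ValidBuilder (fun h => Q (h.map not)) := by
  constructor
  · intro h; exact hQ.1 _
  · intro h i hi heq
    have heq' : Q (((h.map not)).take i) = Q (h.map not) := by
      rw [← List.map_take]
      exact heq
    exact hQ.2 (h.map not) i (by simpa using hi) heq' 

-- nonemptiness of the two kinds of strategy sets
lemma ramsey_nonempty (m n : ℕ) (hm : 3 ≤ m) (p : ℝ) (hp : p ∈ Set.Ioo (0:ℝ) 1) :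
    {N | ∃ B : List Bool → Sym2 ℕ, ValidBuilder B ∧ (1:ℝ)/2 ≤ winProb B m n N p}.Nonempty := by
  obtain ⟨M, e, heinj, hed, hle⟩ := copies_master m hm p hp
  refine ⟨M, nonadapt e, valid_nonadapt heinj hed, le_trans hle ?_⟩
  unfold winProb
  refine Finset.sum_le_sum fun x _ =>
    mul_le_mul_of_nonneg_left ?_ (weight_nonneg hp.1.le hp.2.le x)
  refine ite_le_ite fun hw => ?_
  unfold WinsOn
  rw [edge_nonadapt e (extSeq x)]
  exact Or.inl hw

lemma fquery_nonempty (m : ℕ) (hm : 3 ≤ m) (p : ℝ) (hp : p ∈ Set.Ioo (0:ℝ) 1) :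
    {N | ∃ Q : List Bool → Sym2 ℕ, ValidBuilder Q ∧ (1:ℝ)/2 ≤ queryProb (K m) Q N p}.Nonempty := by
  obtain ⟨M, e, heinj, hed, hle⟩ := copies_master m hm p hp
  refine ⟨M, nonadapt e, valid_nonadapt heinj hed, le_trans hle (le_of_eq ?_)⟩
  unfold queryProb
  refine Finset.sum_congr rfl fun x _ => ?_
  congr 1
  rw [edge_nonadapt e (extSeq x)]
  exact (ite_of_iff (containsCopy_iff e (extSeq x) M)).symm

-- first inequality, part (a)
lemma ramsey_le_fquery_m (m n : ℕ) (hm : 3 ≤ m) (p : ℝ) (hp : p ∈ Set.Ioo (0:ℝ) 1) :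
    onlineRamseyP m n p ≤ fQuery (K m) p := by
  obtain ⟨Q, hQ, hprob⟩ := Nat.sInf_mem (fquery_nonempty m hm p hp)
  refine Nat.sInf_le ⟨Q, hQ, le_trans hprob ?_⟩
  unfold queryProb winProb
  refine Finset.sum_le_sum fun x _ =>
    mul_le_mul_of_nonneg_left ?_ (weight_nonneg hp.1.le hp.2.le x)
  refine ite_le_ite fun hw => ?_
  exact Or.inl ((containsCopy_iff _ _ _).1 hw)

-- first inequality, part (b)
lemma ramsey_le_fquery_n (m n : ℕ) (hn : 3 ≤ n) (p : ℝ) (hp : p ∈ Set.Ioo (0:ℝ) 1) :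
    onlineRamseyP m n p ≤ fQuery (K n) (1 - p) := by
  have hp' : 1 - p ∈ Set.Ioo (0:ℝ) 1 := ⟨by linarith [hp.2], by linarith [hp.1]⟩
  obtain ⟨Q, hQ, hprob⟩ := Nat.sInf_mem (fquery_nonempty n hn (1 - p) hp')
  set G := fQuery (K n) (1 - p) with hG
  refine Nat.sInf_le ⟨fun h => Q (h.map not), flip_valid hQ, le_trans hprob ?_⟩
  unfold queryProb winProb
  rw [sum_flip (fun x => weight p x *
    (if WinsOn (fun h => Q (h.map not)) (extSeq x) m n G then 1 else 0))]
  refine Finset.sum_le_sum fun x _ => ?_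
  erw [weight_flip p x]
  refine mul_le_mul_of_nonneg_left ?_ (weight_nonneg hp'.1.le hp'.2.le x)
  refine ite_le_ite fun hw => ?_
  have hcl := (containsCopy_iff _ _ _).1 hw
  refine Or.inr (clique_transfer ?_ ?_ hcl)
  · intro t ht
    show Q (histSeq (extSeq x) t) = Q ((histSeq (extSeq (fun i => !x i)) t).map not)
    rw [hist_flip_not x ht.le]
  · intro t ht
    exact extSeq_flip_iff x ht true

lemma extSeq_flip_eq {N : ℕ} (x : Fin N → Bool) {t : ℕ} (ht : t < N) (c : Bool) :
    extSeq (fun i => !x i) t = c ↔ extSeq x t = !c := by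
  rw [extSeq_lt _ ht, extSeq_lt x ht]
  cases hx : x ⟨t, ht⟩ <;> cases c <;> simp

-- second inequality
lemma min_le_three_ramsey (m n : ℕ) (hm : 3 ≤ m) (hn : 3 ≤ n) (p : ℝ)
    (hp : p ∈ Set.Ioo (0:ℝ) 1) :
    min (fQuery (K m) p) (fQuery (K n) (1 - p)) ≤ 3 * onlineRamseyP m n p := by
  classical
  obtain ⟨B, hB, hw⟩ := Nat.sInf_mem (ramsey_nonempty m n hm p hp)
  set N := onlineRamseyP m n p with hN
  have hw' : (1:ℝ)/2 ≤ winProb B m n N p := hw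
  have hp0 : (0:ℝ) ≤ p := hp.1.le
  have hp1 : p ≤ 1 := hp.2.le
  set ared : ℝ := ∑ x : Fin N → Bool, weight p x *
    (if HasMonoClique (fun t => B (histSeq (extSeq x) t)) (extSeq x) N m true
      then 1 else 0) with hareddef
  set ablue : ℝ := ∑ x : Fin N → Bool, weight p x *
    (if HasMonoClique (fun t => B (histSeq (extSeq x) t)) (extSeq x) N n false
      then 1 else 0) with habluedef
  have hsplit : winProb B m n N p ≤ ared + ablue := by
    rw [hareddef, habluedef, ← Finset.sum_add_distrib]
    unfold winProb
    refine Finset.sum_le_sum fun x _ => ?_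
    rw [← mul_add]
    refine mul_le_mul_of_nonneg_left ?_ (weight_nonneg hp0 hp1 x)
    unfold WinsOn
    by_cases h1 : HasMonoClique (fun t => B (histSeq (extSeq x) t)) (extSeq x) N m true <;>
      by_cases h2 : HasMonoClique (fun t => B (histSeq (extSeq x) t)) (extSeq x) N n false <;>
      simp [h1, h2]
  have hcases : (1:ℝ)/4 ≤ ared ∨ (1:ℝ)/4 ≤ ablue := by
    by_contra hcon
    push_neg at hcon
    have := hcon.1; have := hcon.2
    linarith [hsplit, hw']
  rcases hcases with hred | hblue
  · exact le_trans (min_le_left _ _) (query_of_red m N p hp0 hp1 B hB hred)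
  · -- flip colors: a blue clique becomes a red one for the flipped strategy
    have hp' : (0:ℝ) ≤ 1 - p := by linarith
    have hp1' : 1 - p ≤ 1 := by linarith
    have hkey : (1:ℝ)/4 ≤ ∑ x : Fin N → Bool, weight (1 - p) x *
        (if HasMonoClique (fun t => (fun h => B (h.map not)) (histSeq (extSeq x) t))
            (extSeq x) N n true then 1 else 0) := by
      rw [sum_flip (fun x => weight (1 - p) x *
        (if HasMonoClique (fun t => (fun h => B (h.map not)) (histSeq (extSeq x) t))
            (extSeq x) N n true then 1 else 0))]
      have heach : ∀ x : Fin N → Bool,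
          weight (1 - p) (fun i => !x i) *
            (if HasMonoClique
                (fun t => (fun h => B (h.map not)) (histSeq (extSeq (fun i => !x i)) t))
                (extSeq (fun i => !x i)) N n true then (1:ℝ) else 0)
          = weight p x *
            (if HasMonoClique (fun t => B (histSeq (extSeq x) t)) (extSeq x) N n false
              then 1 else 0) := by
        intro x
        have hwe : weight (1 - p) (fun i => !x i) = weight p x := by
          rw [weight_flip]; norm_num
        rw [hwe]
        congr 1
        refine ite_of_iff ⟨fun h => ?_, fun h => ?_⟩
        · refine clique_transfer ?_ ?_ h
          · intro t ht
            show B ((histSeq (extSeq (fun i => !x i)) t).map not) = B (histSeq (extSeq x) t)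
            rw [hist_flip_not x ht.le]
          · intro t ht
            simpa using extSeq_flip_eq x ht true
        · refine clique_transfer ?_ ?_ h
          · intro t ht
            show B (histSeq (extSeq x) t)
              = B ((histSeq (extSeq (fun i => !x i)) t).map not)
            rw [hist_flip_not x ht.le]
          · intro t ht
            simpa using (extSeq_flip_eq x ht true).symm
      rw [Finset.sum_congr rfl fun x _ => heach x]
      exact hblue
    exact le_trans (min_le_right _ _)
      (query_of_red n N (1 - p) hp' hp1' (fun h => B (h.map not)) (flip_valid hB) hkey)

theorem stmt5 (m n : ℕ) (hm : 3 ≤ m) (hn : 3 ≤ n) (p : ℝ) (hp : p ∈ Set.Ioo (0 : ℝ) 1) :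
    onlineRamseyP m n p ≤ min (fQuery (K m) p) (fQuery (K n) (1 - p)) ∧
      min (fQuery (K m) p) (fQuery (K n) (1 - p)) ≤ 3 * onlineRamseyP m n p := by
  exact ⟨le_min (ramsey_le_fquery_m m n hm p hp) (ramsey_le_fquery_n m n hn p hp),
    min_le_three_ramsey m n hm hn p hp⟩

end OnlineRamseyGame
end
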